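/- arXiv:math/0207159 — 4 statements merged into one kernel-verified Lean document; each statement's English description precedes it below -/
import Mathlib

section
/- The q-analogue of the exponential summation ₁φ₁: for |c/a| small enough (or as an identity of formal/convergent series with a ≠ 0), Σ_{k=0}^{∞} ((a;q)_k / ((c;q)_k (q;q)_k)) (-1)^k q^{k(k-1)/2} (c/a)^k = (c/a;q)_∞ / (c;q)_∞. -/
open Finset

/-- The q-Pochhammer symbol `(a;q)_k = ∏_{j=0}^{k-1} (1 - a q^j)`. -/
noncomputable def qPoch (a q : ℂ) (k : ℕ) : ℂ := ∏ j ∈ range k, (1 - a * q ^ j)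

/-- The infinite q-Pochhammer symbol `(a;q)_∞ = ∏_{j=0}^{∞} (1 - a q^j)`. -/
noncomputable def qPochInf (a q : ℂ) : ℂ := ∏' j : ℕ, (1 - a * q ^ j)

namespace QOPO

open Filter

lemma tri_succ (k : ℕ) : (k+1)*((k+1)-1)/2 = k*(k-1)/2 + k :=
  calc (k+1)*((k+1)-1)/2 = (k+1).choose 2 := (Nat.choose_two_right _).symm
    _ = k.choose 1 + k.choose 2 := Nat.choose_succ_succ k 1
    _ = k*(k-1)/2 + k := by rw [Nat.choose_one_right, Nat.choose_two_right]; exact Nat.add_comm _ _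

lemma tri_add (k n : ℕ) : (k+n)*((k+n)-1)/2 = k*(k-1)/2 + (n*(n-1)/2 + k*n) := by
  induction n with
  | zero => simp
  | succ n ih =>
    have h1 : k + (n+1) = (k+n) + 1 := by omega
    rw [h1, tri_succ, ih, tri_succ, Nat.mul_succ]
    ring

lemma tri_le_tri_succ (k : ℕ) : k*(k-1)/2 ≤ (k+1)*((k+1)-1)/2 := by
  rw [tri_succ]; omega

variable {q : ℝ}

lemma qpow_lt_one (hq0 : 0 < q) (hq1 : q < 1) {m : ℕ} (hm : 1 ≤ m) : q ^ m < 1 :=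
  pow_lt_one₀ hq0.le hq1 (by omega)

lemma one_sub_q_mul_ne (hq0 : 0 < q) (hq1 : q < 1) (j : ℕ) :
    (1 : ℂ) - (q:ℂ) * (q:ℂ)^j ≠ 0 := by
  rw [sub_ne_zero]
  intro h
  have : ((q ^ (j+1) : ℝ) : ℂ) = ((1:ℝ) : ℂ) := by push_cast; rw [pow_succ']; exact h.symm
  have := Complex.ofReal_injective this
  have := qpow_lt_one hq0 hq1 (m := j+1) (by omega)
  linarith

lemma qPoch_ne_zero {x : ℂ} (h : ∀ j : ℕ, 1 - x * (q:ℂ)^j ≠ 0) (k : ℕ) :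
    qPoch x q k ≠ 0 :=
  Finset.prod_ne_zero_iff.mpr fun j _ => h j

lemma qq_ne_zero (hq0 : 0 < q) (hq1 : q < 1) (k : ℕ) : qPoch q q k ≠ 0 :=
  qPoch_ne_zero (one_sub_q_mul_ne hq0 hq1) k

lemma qPoch_succ (x : ℂ) (k : ℕ) : qPoch x q (k+1) = qPoch x q k * (1 - x * (q:ℂ)^k) :=
  prod_range_succ _ _

lemma qq_succ (k : ℕ) : qPoch (q:ℂ) q (k+1) = qPoch (q:ℂ) q k * (1 - (q:ℂ)^(k+1)) := by
  rw [qPoch_succ, pow_succ']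

lemma norm_q_pow (hq0 : 0 < q) (j : ℕ) : ‖(q:ℂ)^j‖ = q^j := by
  rw [norm_pow, Complex.norm_real, Real.norm_eq_abs, abs_of_pos hq0]

lemma norm_qPoch_le (hq0 : 0 < q) (hq1 : q < 1) (x : ℂ) (k : ℕ) :
    ‖qPoch x q k‖ ≤ (1 + ‖x‖)^k := by
  refine le_trans (Finset.norm_prod_le _ _) ?_
  calc ∏ i ∈ range k, ‖1 - x * (q:ℂ) ^ i‖ ≤ ∏ _i ∈ range k, (1 + ‖x‖) := ?_
    _ = (1 + ‖x‖)^k := by rw [Finset.prod_const, card_range]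
  refine Finset.prod_le_prod (fun j _ => norm_nonneg _) (fun j _ => ?_)
  refine le_trans (norm_sub_le _ _) ?_
  rw [norm_one, norm_mul, norm_q_pow hq0]
  have h1 : q ^ j ≤ 1 := (pow_le_one₀ hq0.le hq1.le)
  nlinarith [norm_nonneg x]

lemma summable_norm_log (hq0 : 0 < q) (hq1 : q < 1) (x : ℂ) :
    Summable (fun j : ℕ => ‖Complex.log (1 - x * (q:ℂ)^j)‖) := by
  obtain ⟨J, hJ⟩ := exists_pow_lt_of_lt_one
    (x := (1/2) / (1 + ‖x‖)) (by positivity) hq1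
  rw [← summable_nat_add_iff J]
  have hb : ∀ j : ℕ, ‖Complex.log (1 - x * (q:ℂ)^(j+J))‖ ≤ (3/2 * ‖x‖ * q^J) * q^j := by
    intro j
    have hz : ‖-(x * (q:ℂ)^(j+J))‖ ≤ 1/2 := by
      rw [norm_neg, norm_mul, norm_q_pow hq0, pow_add]
      have h1 : q ^ j ≤ 1 := pow_le_one₀ hq0.le hq1.le
      have h2 : ‖x‖ * q^J ≤ 1/2 := by
        have : (1 + ‖x‖) * q ^ J ≤ 1/2 := by
          rw [div_div] at hJ
          have hpos : (0:ℝ) < 1 + ‖x‖ := by positivity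
          have h3 : (1 + ‖x‖) * q ^ J ≤ (1 + ‖x‖) * (1/(2*(1+‖x‖))) :=
            mul_le_mul_of_nonneg_left hJ.le hpos.le
          have h4 : (1 + ‖x‖) * (1/(2*(1+‖x‖))) = 1/2 := by field_simp
          linarith
        nlinarith [pow_nonneg hq0.le J, norm_nonneg x]
      nlinarith [pow_nonneg hq0.le j, pow_nonneg hq0.le J, norm_nonneg x]
    have := Complex.norm_log_one_add_half_le_self hz
    have heq : (1 : ℂ) + -(x * (q:ℂ)^(j+J)) = 1 - x * (q:ℂ)^(j+J) := by ring
    rw [heq] at this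
    refine le_trans this ?_
    rw [norm_neg, norm_mul, norm_q_pow hq0, pow_add]
    ring_nf
    nlinarith [pow_nonneg hq0.le j, pow_nonneg hq0.le J, norm_nonneg x,
      mul_nonneg (pow_nonneg hq0.le j) (pow_nonneg hq0.le J)]
  refine Summable.of_nonneg_of_le (fun j => norm_nonneg _) hb ?_
  exact ((summable_geometric_of_lt_one hq0.le hq1).mul_left _)

lemma qPoch_eq_exp (hq0 : 0 < q) (hq1 : q < 1) {x : ℂ}
    (h : ∀ j : ℕ, 1 - x * (q:ℂ)^j ≠ 0) (k : ℕ) :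
    qPoch x q k = Complex.exp (∑ j ∈ range k, Complex.log (1 - x * (q:ℂ)^j)) := by
  rw [Complex.exp_sum]
  exact Finset.prod_congr rfl fun j _ => (Complex.exp_log (h j)).symm

lemma qPoch_lower_bound (hq0 : 0 < q) (hq1 : q < 1) {x : ℂ}
    (h : ∀ j : ℕ, 1 - x * (q:ℂ)^j ≠ 0) :
    ∃ δ : ℝ, 0 < δ ∧ ∀ k, δ ≤ ‖qPoch x q k‖ := by
  set S := ∑' j : ℕ, ‖Complex.log (1 - x * (q:ℂ)^j)‖ with hS
  refine ⟨Real.exp (-S), Real.exp_pos _, fun k => ?_⟩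
  rw [qPoch_eq_exp hq0 hq1 h k]
  have h1 : ‖Complex.exp (∑ j ∈ range k, Complex.log (1 - x * (q:ℂ)^j))‖
      = Real.exp ((∑ j ∈ range k, Complex.log (1 - x * (q:ℂ)^j)).re) := by
    rw [Complex.norm_exp]
  rw [h1]
  apply Real.exp_le_exp.mpr
  have h2 : -‖∑ j ∈ range k, Complex.log (1 - x * (q:ℂ)^j)‖
      ≤ (∑ j ∈ range k, Complex.log (1 - x * (q:ℂ)^j)).re := by
    have := Complex.abs_re_le_norm (∑ j ∈ range k, Complex.log (1 - x * (q:ℂ)^j))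
    cases abs_cases (∑ j ∈ range k, Complex.log (1 - x * (q:ℂ)^j)).re with
    | inl hcase => linarith [hcase.1]
    | inr hcase => linarith [hcase.1]
  refine le_trans ?_ h2
  rw [neg_le_neg_iff]
  refine le_trans (norm_sum_le _ _) ?_
  exact Summable.sum_le_tsum _ (fun i _ => norm_nonneg _) (summable_norm_log hq0 hq1 x)

lemma hasProd_qPochInf (hq0 : 0 < q) (hq1 : q < 1) (x : ℂ) :
    HasProd (fun j : ℕ => 1 - x * (q:ℂ)^j) (qPochInf x q) := by
  by_cases h : ∀ j : ℕ, 1 - x * (q:ℂ)^j ≠ 0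
  · have hs : Summable (fun j : ℕ => Complex.log (1 - x * (q:ℂ)^j)) :=
      (summable_norm_log hq0 hq1 x).of_norm
    have hp : HasProd (fun j : ℕ => 1 - x * (q:ℂ)^j)
        (Complex.exp (∑' j : ℕ, Complex.log (1 - x * (q:ℂ)^j))) := by
      have := hs.hasSum.cexp
      refine HasProd.congr_fun this fun j => ?_
      exact (Complex.exp_log (h j)).symm
    rwa [qPochInf, hp.tprod_eq]
  · push_neg at h
    obtain ⟨j0, hj0⟩ := h
    have hz : HasProd (fun j : ℕ => 1 - x * (q:ℂ)^j) 0 := by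
      rw [HasProd]
      refine Tendsto.congr' ?_ tendsto_const_nhds
      rw [EventuallyEq]; refine eventually_atTop.mpr ?_
      exact ⟨{j0}, fun s hs => (Finset.prod_eq_zero (hs (Finset.mem_singleton_self j0)) hj0).symm⟩
    rwa [qPochInf, hz.tprod_eq]

lemma qPochInf_ne_zero (hq0 : 0 < q) (hq1 : q < 1) {x : ℂ}
    (h : ∀ j : ℕ, 1 - x * (q:ℂ)^j ≠ 0) : qPochInf x q ≠ 0 := by
  have hs : Summable (fun j : ℕ => Complex.log (1 - x * (q:ℂ)^j)) :=
    (summable_norm_log hq0 hq1 x).of_norm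
  have hp : HasProd (fun j : ℕ => 1 - x * (q:ℂ)^j)
      (Complex.exp (∑' j : ℕ, Complex.log (1 - x * (q:ℂ)^j))) := by
    have := hs.hasSum.cexp
    refine HasProd.congr_fun this fun j => ?_
    exact (Complex.exp_log (h j)).symm
  rw [qPochInf, hp.tprod_eq]
  exact Complex.exp_ne_zero _

lemma qPochInf_eq_exp (hq0 : 0 < q) (hq1 : q < 1) {x : ℂ}
    (h : ∀ j : ℕ, 1 - x * (q:ℂ)^j ≠ 0) :
    qPochInf x q = Complex.exp (∑' j : ℕ, Complex.log (1 - x * (q:ℂ)^j)) := by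
  have hs : Summable (fun j : ℕ => Complex.log (1 - x * (q:ℂ)^j)) :=
    (summable_norm_log hq0 hq1 x).of_norm
  have hp : HasProd (fun j : ℕ => 1 - x * (q:ℂ)^j)
      (Complex.exp (∑' j : ℕ, Complex.log (1 - x * (q:ℂ)^j))) := by
    have := hs.hasSum.cexp
    refine HasProd.congr_fun this fun j => ?_
    exact (Complex.exp_log (h j)).symm
  rw [qPochInf, hp.tprod_eq]

lemma tendsto_qPoch (hq0 : 0 < q) (hq1 : q < 1) (x : ℂ) :
    Tendsto (fun N : ℕ => qPoch x q N) atTop (nhds (qPochInf x q)) :=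
  (hasProd_qPochInf hq0 hq1 x).tendsto_prod_nat

lemma summable_pow_mul (hq0 : 0 < q) (hq1 : q < 1) {M : ℝ} (hM : 0 ≤ M) :
    Summable (fun k : ℕ => M^k * q^(k*(k-1)/2)) := by
  refine summable_of_ratio_norm_eventually_le (r := 1/2) (by norm_num) ?_
  have hev : ∀ᶠ k : ℕ in atTop, q^k < 1/(2*(M+1)) :=
    (tendsto_pow_atTop_nhds_zero_of_lt_one hq0.le hq1).eventually
      (eventually_lt_nhds (by positivity))
  filter_upwards [hev] with k hk
  have h1 : M^(k+1) * q^((k+1)*((k+1)-1)/2) = (M * q^k) * (M^k * q^(k*(k-1)/2)) := by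
    rw [tri_succ, pow_add, pow_succ]
    ring
  rw [Real.norm_eq_abs, Real.norm_eq_abs, h1,
    abs_of_nonneg (by positivity), abs_of_nonneg (by positivity)]
  have h2 : M * q^k ≤ 1/2 := by
    have h3 : M * q^k ≤ (M+1) * q^k := by nlinarith [pow_nonneg hq0.le k]
    have h4 : (M+1) * q^k ≤ (M+1) * (1/(2*(M+1))) := by nlinarith
    have h5 : (M+1) * (1/(2*(M+1))) = 1/2 := by field_simp
    linarith
  nlinarith [pow_nonneg hM k, pow_nonneg hq0.le (k*(k-1)/2), mul_nonneg (pow_nonneg hM k) (pow_nonneg hq0.le (k*(k-1)/2))]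

lemma summable_of_qbound (hq0 : 0 < q) (hq1 : q < 1) (f : ℕ → ℂ) {C M : ℝ} (hM : 0 ≤ M)
    (h : ∀ k, ‖f k‖ ≤ C * (M^k * q^(k*(k-1)/2))) : Summable f :=
  Summable.of_norm_bounded ((summable_pow_mul hq0 hq1 hM).mul_left C) h

/-- Term of Euler's series. -/
noncomputable def eterm (q : ℝ) (x : ℂ) (n : ℕ) : ℂ :=
  (-1)^n * (q:ℂ)^(n*(n-1)/2) * x^n / qPoch q q n

lemma eterm_zero (x : ℂ) : eterm q x 0 = 1 := by
  simp [eterm, qPoch]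

lemma norm_eterm_le (hq0 : 0 < q) (hq1 : q < 1) {δ : ℝ} (hδ : 0 < δ)
    (hlb : ∀ k, δ ≤ ‖qPoch (q:ℂ) q k‖) (x : ℂ) (n : ℕ) :
    ‖eterm q x n‖ ≤ δ⁻¹ * (‖x‖^n * q^(n*(n-1)/2)) := by
  rw [eterm, norm_div, norm_mul, norm_mul, norm_pow, norm_pow, norm_pow, norm_neg, norm_one,
    one_pow, one_mul, Complex.norm_real, Real.norm_eq_abs, abs_of_pos hq0]
  rw [div_eq_mul_inv]
  have h1 : ‖qPoch (q:ℂ) q n‖⁻¹ ≤ δ⁻¹ := by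
    apply inv_anti₀ hδ (hlb n)
  calc q^(n*(n-1)/2) * ‖x‖^n * ‖qPoch (q:ℂ) q n‖⁻¹
      ≤ q^(n*(n-1)/2) * ‖x‖^n * δ⁻¹ := by
        apply mul_le_mul_of_nonneg_left h1 (by positivity)
    _ = δ⁻¹ * (‖x‖^n * q^(n*(n-1)/2)) := by ring

lemma summable_eterm (hq0 : 0 < q) (hq1 : q < 1) (x : ℂ) : Summable (eterm q x) := by
  obtain ⟨δ, hδ, hlb⟩ := qPoch_lower_bound hq0 hq1 (one_sub_q_mul_ne hq0 hq1)
  exact summable_of_qbound hq0 hq1 _ (norm_nonneg x)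
    (fun n => norm_eterm_le hq0 hq1 hδ hlb x n)

lemma eterm_q_mul (hq0 : 0 < q) (x : ℂ) (n : ℕ) :
    eterm q ((q:ℂ) * x) n = (q:ℂ)^n * eterm q x n := by
  rw [eterm, eterm, mul_pow]
  ring

lemma euler_step (hq0 : 0 < q) (hq1 : q < 1) (x : ℂ) :
    ∑' n, eterm q x n = (1 - x) * ∑' n, eterm q ((q:ℂ) * x) n := by
  have hsx := summable_eterm hq0 hq1 x
  have hsqx := summable_eterm hq0 hq1 ((q:ℂ) * x)
  have hg : Summable (fun n => eterm q x n - eterm q ((q:ℂ)*x) n) := hsx.sub hsqx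
  have h1 : ∑' n, (eterm q x n - eterm q ((q:ℂ)*x) n)
      = ∑' n, eterm q x n - ∑' n, eterm q ((q:ℂ)*x) n := Summable.tsum_sub hsx hsqx
  have h2 : ∑' n, (eterm q x n - eterm q ((q:ℂ)*x) n)
      = ∑' n, (eterm q x (n+1) - eterm q ((q:ℂ)*x) (n+1)) := by
    rw [Summable.tsum_eq_zero_add hg]
    simp [eterm_zero]
  have h3 : ∀ n : ℕ, eterm q x (n+1) - eterm q ((q:ℂ)*x) (n+1)
      = -(x * eterm q ((q:ℂ)*x) n) := by
    intro n
    have hQ : qPoch (q:ℂ) q (n+1) = qPoch (q:ℂ) q n * (1 - (q:ℂ)^(n+1)) := qq_succ n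
    have hQn : qPoch (q:ℂ) q n ≠ 0 := qq_ne_zero hq0 hq1 n
    have hq1n : (1:ℂ) - (q:ℂ)^(n+1) ≠ 0 := by
      have := one_sub_q_mul_ne hq0 hq1 n
      rwa [← pow_succ'] at this
    rw [eterm, eterm, eterm, hQ, tri_succ, mul_pow]
    rw [pow_add, pow_succ, pow_succ]
    field_simp
    ring
  have h4 : ∑' n, (eterm q x (n+1) - eterm q ((q:ℂ)*x) (n+1))
      = -(x * ∑' n, eterm q ((q:ℂ)*x) n) := by
    rw [tsum_congr h3, tsum_neg, tsum_mul_left]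
  have := h1.symm.trans (h2.trans h4)
  -- this : ∑' eterm x - ∑' eterm qx = -(x * ∑' eterm qx)
  linear_combination this

lemma euler_iter (hq0 : 0 < q) (hq1 : q < 1) (x : ℂ) (N : ℕ) :
    ∑' n, eterm q x n = qPoch x q N * ∑' n, eterm q (x * (q:ℂ)^N) n := by
  induction N with
  | zero => simp [qPoch]
  | succ N ih =>
    rw [ih, euler_step hq0 hq1 (x * (q:ℂ)^N)]
    have harg : (q:ℂ) * (x * (q:ℂ)^N) = x * (q:ℂ)^(N+1) := by rw [pow_succ]; ring
    rw [harg, qPoch_succ]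
    ring

lemma tendsto_eterm_sum_one (hq0 : 0 < q) (hq1 : q < 1) (x : ℂ) :
    Tendsto (fun N : ℕ => ∑' n, eterm q (x * (q:ℂ)^N) n) atTop (nhds 1) := by
  obtain ⟨δ, hδ, hlb⟩ := qPoch_lower_bound hq0 hq1 (one_sub_q_mul_ne hq0 hq1)
  set C : ℝ := ∑' n : ℕ, δ⁻¹ * (‖x‖^n * q^(n*(n-1)/2)) with hC
  have hCs : Summable (fun n : ℕ => δ⁻¹ * (‖x‖^n * q^(n*(n-1)/2))) := by
    have : Summable (fun n : ℕ => ‖x‖^n * q^(n*(n-1)/2)) := by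
      have := summable_of_qbound hq0 hq1 (fun n : ℕ => ((‖x‖^n * q^(n*(n-1)/2) : ℝ) : ℂ))
        (C := 1) (M := ‖x‖) (norm_nonneg x) ?_
      · have h2 := this.norm
        refine h2.congr fun n => ?_
        rw [Complex.norm_real, Real.norm_eq_abs, abs_of_nonneg (by positivity)]
      · intro k
        rw [Complex.norm_real, Real.norm_eq_abs, abs_of_nonneg (by positivity), one_mul]
    exact this.mul_left _
  have hCnn : 0 ≤ C := tsum_nonneg (fun n => by positivity)
  have key : ∀ N : ℕ, ‖(∑' n, eterm q (x * (q:ℂ)^N) n) - 1‖ ≤ (C * ‖x‖) * q^N := by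
    intro N
    set y := x * (q:ℂ)^N with hy
    have hyx : ‖y‖ = ‖x‖ * q^N := by rw [hy, norm_mul, norm_q_pow hq0]
    have hs := summable_eterm hq0 hq1 y
    have h1 : ∑' n, eterm q y n = 1 + ∑' n, eterm q y (n+1) := by
      rw [Summable.tsum_eq_zero_add hs, eterm_zero]
    rw [h1]
    have h2 : (1 : ℂ) + ∑' n, eterm q y (n+1) - 1 = ∑' n, eterm q y (n+1) := by ring
    rw [h2]
    have hsucc : Summable (fun n => eterm q y (n+1)) := by
      rw [summable_nat_add_iff]; exact hs
    have hb : ∀ n : ℕ, ‖eterm q y (n+1)‖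
        ≤ (δ⁻¹ * (‖x‖^n * q^(n*(n-1)/2))) * (‖x‖ * q^N) := by
      intro n
      have h3 := norm_eterm_le hq0 hq1 hδ hlb y (n+1)
      refine le_trans h3 ?_
      have h5 : ‖y‖^n ≤ ‖x‖^n := by
        apply pow_le_pow_left₀ (norm_nonneg _)
        rw [hyx]
        nlinarith [pow_le_one₀ hq0.le hq1.le (n := N), norm_nonneg x, pow_nonneg hq0.le N]
      have h6 : q^((n+1)*((n+1)-1)/2) ≤ q^(n*(n-1)/2) :=
        pow_le_pow_of_le_one hq0.le hq1.le (tri_le_tri_succ n)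
      have e1 : ‖y‖^(n+1) ≤ ‖x‖^n * (‖x‖ * q^N) := by
        rw [pow_succ]
        exact mul_le_mul h5 (le_of_eq hyx) (norm_nonneg _) (by positivity)
      have e2 : ‖y‖^(n+1) * q^((n+1)*((n+1)-1)/2) ≤ (‖x‖^n * (‖x‖ * q^N)) * q^(n*(n-1)/2) :=
        mul_le_mul e1 h6 (by positivity) (by positivity)
      calc δ⁻¹ * (‖y‖^(n+1) * q^((n+1)*((n+1)-1)/2))
          ≤ δ⁻¹ * ((‖x‖^n * (‖x‖ * q^N)) * q^(n*(n-1)/2)) :=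
            mul_le_mul_of_nonneg_left e2 (by positivity)
        _ = (δ⁻¹ * (‖x‖^n * q^(n*(n-1)/2))) * (‖x‖ * q^N) := by ring
    have hnorm : Summable (fun n => ‖eterm q y (n+1)‖) :=
      Summable.of_nonneg_of_le (fun n => norm_nonneg _) hb (hCs.mul_right _)
    refine le_trans (norm_tsum_le_tsum_norm hnorm) ?_
    refine le_trans (Summable.tsum_le_tsum hb hnorm (hCs.mul_right _)) ?_
    rw [tsum_mul_right]
    calc C * (‖x‖ * q^N) = (C * ‖x‖) * q^N := by ring
      _ ≤ (C * ‖x‖) * q^N := le_refl _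
  have hz : Tendsto (fun N : ℕ => (∑' n, eterm q (x * (q:ℂ)^N) n) - 1) atTop (nhds 0) := by
    apply squeeze_zero_norm key
    have := (tendsto_pow_atTop_nhds_zero_of_lt_one hq0.le hq1).const_mul (C * ‖x‖)
    simpa using this
  have := hz.add_const 1
  simpa using this

theorem euler (hq0 : 0 < q) (hq1 : q < 1) (x : ℂ) :
    ∑' n, eterm q x n = qPochInf x q := by
  have h1 : Tendsto (fun N : ℕ => qPoch x q N * ∑' n, eterm q (x * (q:ℂ)^N) n)
      atTop (nhds (qPochInf x q * 1)) :=
    (tendsto_qPoch hq0 hq1 x).mul (tendsto_eterm_sum_one hq0 hq1 x)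
  have h2 : (fun N : ℕ => qPoch x q N * ∑' n, eterm q (x * (q:ℂ)^N) n)
      = fun _ : ℕ => ∑' n, eterm q x n := by
    funext N
    exact (euler_iter hq0 hq1 x N).symm
  rw [h2] at h1
  have h3 := tendsto_nhds_unique h1 tendsto_const_nhds
  rw [mul_one] at h3
  exact h3.symm

lemma one_sub_qpow_ne (hq0 : 0 < q) (hq1 : q < 1) {m : ℕ} (hm : 1 ≤ m) :
    (1:ℂ) - (q:ℂ)^m ≠ 0 := by
  rw [sub_ne_zero]
  intro h
  have : ((1:ℝ):ℂ) = ((q^m : ℝ):ℂ) := by push_cast; exact h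
  have := Complex.ofReal_injective this
  have := qpow_lt_one hq0 hq1 hm
  linarith

lemma cancel_aux (A B d : ℂ) (hd : d ≠ 0) : d * (A / (B * d)) = A / B := by
  rcases eq_or_ne B 0 with hB | hB
  · simp [hB]
  · field_simp

theorem vdm (hq0 : 0 < q) (hq1 : q < 1) {a : ℂ} (ha : a ≠ 0) (N : ℕ) :
    ∑ k ∈ range (N+1), qPoch a q k * (a⁻¹)^k / (qPoch q q k * qPoch q q (N-k))
      = (a⁻¹)^N / qPoch q q N := by
  induction N with
  | zero => simp [qPoch]
  | succ N ih =>
    have hq1N : (1:ℂ) - (q:ℂ)^(N+1) ≠ 0 := one_sub_qpow_ne hq0 hq1 (by omega)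
    set g : ℕ → ℂ := fun k =>
      qPoch a q k * (a⁻¹)^k / (qPoch q q k * qPoch q q (N+1-k)) with hg
    set T : ℕ → ℂ := fun k =>
      qPoch a q k * (a⁻¹)^k / (qPoch q q k * qPoch q q (N-k)) with hT
    have key : (1 - (q:ℂ)^(N+1)) * ∑ k ∈ range (N+2), g k
        = a⁻¹ * ∑ k ∈ range (N+1), T k := by
      have split : ∀ k ∈ range (N+2),
          (1 - (q:ℂ)^(N+1)) * g k
            = (q:ℂ)^k * (1 - (q:ℂ)^(N+1-k)) * g k + (1 - (q:ℂ)^k) * g k := by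
        intro k hk
        have hkle : k ≤ N+1 := by have := mem_range.mp hk; omega
        have hqq : (q:ℂ)^k * (q:ℂ)^(N+1-k) = (q:ℂ)^(N+1) := by
          rw [← pow_add]; congr 1; omega
        have : (1 - (q:ℂ)^(N+1)) = (q:ℂ)^k * (1 - (q:ℂ)^(N+1-k)) + (1 - (q:ℂ)^k) := by
          rw [mul_sub, hqq]; ring
        rw [this]; ring
      rw [Finset.mul_sum, Finset.sum_congr rfl split, Finset.sum_add_distrib]
      have hA : ∑ k ∈ range (N+2), (q:ℂ)^k * (1 - (q:ℂ)^(N+1-k)) * g k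
          = ∑ k ∈ range (N+1), (q:ℂ)^k * T k := by
        rw [Finset.sum_range_succ]
        have hlast : (q:ℂ)^(N+1) * (1 - (q:ℂ)^(N+1-(N+1))) * g (N+1) = 0 := by simp
        rw [hlast, add_zero]
        refine Finset.sum_congr rfl fun k hk => ?_
        have hkle : k ≤ N := by have := mem_range.mp hk; omega
        have hNk : N+1-k = N-k+1 := by omega
        have hne1 : (1:ℂ) - (q:ℂ)^(N-k+1) ≠ 0 := one_sub_qpow_ne hq0 hq1 (by omega)
        have expand : g k = (qPoch a q k * (a⁻¹)^k)
            / ((qPoch q q k * qPoch q q (N-k)) * (1 - (q:ℂ)^(N-k+1))) := by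
          simp only [hg]
          rw [hNk, qq_succ]
          ring
        rw [expand, hNk]
        simp only [hT]
        have : (q:ℂ)^k * (1 - (q:ℂ)^(N-k+1)) * ((qPoch a q k * (a⁻¹)^k)
            / ((qPoch q q k * qPoch q q (N-k)) * (1 - (q:ℂ)^(N-k+1))))
            = (q:ℂ)^k * ((1 - (q:ℂ)^(N-k+1)) * ((qPoch a q k * (a⁻¹)^k)
            / ((qPoch q q k * qPoch q q (N-k)) * (1 - (q:ℂ)^(N-k+1))))) := by ring
        rw [this, cancel_aux _ _ _ hne1]
      have hB : ∑ k ∈ range (N+2), (1 - (q:ℂ)^k) * g k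
          = ∑ k ∈ range (N+1), ((1 - a*(q:ℂ)^k) * a⁻¹) * T k := by
        rw [Finset.sum_range_succ']
        have hfirst : (1 - (q:ℂ)^0) * g 0 = 0 := by simp
        rw [hfirst, add_zero]
        refine Finset.sum_congr rfl fun k hk => ?_
        have hkle : k ≤ N := by have := mem_range.mp hk; omega
        have hne1 : (1:ℂ) - (q:ℂ)^(k+1) ≠ 0 := one_sub_qpow_ne hq0 hq1 (by omega)
        have hNk : N+1-(k+1) = N-k := by omega
        have expand : g (k+1) = ((qPoch a q k * (1 - a*(q:ℂ)^k)) * ((a⁻¹)^k * a⁻¹))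
            / ((qPoch q q k * qPoch q q (N-k)) * (1 - (q:ℂ)^(k+1))) := by
          simp only [hg]
          rw [hNk, qq_succ, qPoch_succ]
          ring
        rw [expand]
        simp only [hT]
        have : (1 - (q:ℂ)^(k+1)) * (((qPoch a q k * (1 - a*(q:ℂ)^k)) * ((a⁻¹)^k * a⁻¹))
            / ((qPoch q q k * qPoch q q (N-k)) * (1 - (q:ℂ)^(k+1))))
            = ((qPoch a q k * (1 - a*(q:ℂ)^k)) * ((a⁻¹)^k * a⁻¹))
            / (qPoch q q k * qPoch q q (N-k)) := cancel_aux _ _ _ hne1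
        rw [this]
        rw [div_eq_mul_inv, div_eq_mul_inv]
        ring
      rw [hA, hB, ← Finset.sum_add_distrib, Finset.mul_sum]
      refine Finset.sum_congr rfl fun k hk => ?_
      have haa : a * a⁻¹ = 1 := mul_inv_cancel₀ ha
      linear_combination (-((q:ℂ)^k * T k)) * haa
    rw [ih] at key
    have hrw : qPoch (q:ℂ) q (N+1) = qPoch (q:ℂ) q N * (1 - (q:ℂ)^(N+1)) := qq_succ N
    have h2 : ∑ k ∈ range (N+2), g k
        = a⁻¹ * ((a⁻¹)^N / qPoch q q N) / (1 - (q:ℂ)^(N+1)) := by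
      rw [eq_div_iff hq1N]
      linear_combination key
    rw [h2, hrw]
    have hstep : a⁻¹ * ((a⁻¹)^N / qPoch q q N) = (a⁻¹)^(N+1) / qPoch q q N := by
      rw [pow_succ]; ring
    rw [hstep, div_div]

set_option maxHeartbeats 2000000 in
theorem main (hq0 : 0 < q) (hq1 : q < 1) (a c : ℂ) (ha : a ≠ 0)
    (hc : ∀ m : ℕ, c * (q : ℂ) ^ m ≠ 1) :
    ∑' k : ℕ,
      qPoch a (q : ℂ) k / (qPoch c (q : ℂ) k * qPoch (q : ℂ) (q : ℂ) k) *
        ((-1 : ℂ) ^ k * (q : ℂ) ^ (k * (k - 1) / 2) * (c / a) ^ k)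
      = qPochInf (c / a) (q : ℂ) / qPochInf c (q : ℂ) := by
  have hcfac : ∀ j : ℕ, (1:ℂ) - c * (q:ℂ)^j ≠ 0 := by
    intro j h
    rw [sub_eq_zero] at h
    exact hc j h.symm
  obtain ⟨δc, hδc, hlbc⟩ := qPoch_lower_bound hq0 hq1 hcfac
  obtain ⟨δq, hδq, hlbq⟩ := qPoch_lower_bound hq0 hq1 (one_sub_q_mul_ne hq0 hq1)
  have hPc : qPochInf c (q:ℂ) ≠ 0 := qPochInf_ne_zero hq0 hq1 hcfac
  set T : ℕ → ℂ := fun k =>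
    qPoch a (q : ℂ) k / (qPoch c (q : ℂ) k * qPoch (q : ℂ) (q : ℂ) k) *
        ((-1 : ℂ) ^ k * (q : ℂ) ^ (k * (k - 1) / 2) * (c / a) ^ k) with hT
  set F : ℕ × ℕ → ℂ := fun p =>
    (-1:ℂ)^(p.1+p.2) * (q:ℂ)^((p.1+p.2)*((p.1+p.2)-1)/2) * (c/a)^p.1 * c^p.2 *
      qPoch a (q:ℂ) p.1 / (qPoch (q:ℂ) (q:ℂ) p.1 * qPoch (q:ℂ) (q:ℂ) p.2) with hF
  -- summability of F
  have hFnorm : ∀ p : ℕ × ℕ, ‖F p‖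
      ≤ (δq⁻¹ * ((‖c/a‖ * (1+‖a‖))^p.1 * q^(p.1*(p.1-1)/2)))
        * (δq⁻¹ * (‖c‖^p.2 * q^(p.2*(p.2-1)/2))) := by
    rintro ⟨k, n⟩
    have e1 : ‖F (k, n)‖ = q^((k+n)*((k+n)-1)/2) * ‖c/a‖^k * ‖c‖^n * ‖qPoch a (q:ℂ) k‖
        / (‖qPoch (q:ℂ) (q:ℂ) k‖ * ‖qPoch (q:ℂ) (q:ℂ) n‖) := by
      simp only [hF, norm_div, norm_mul, norm_pow, norm_neg, norm_one, one_pow,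
        Complex.norm_real, Real.norm_eq_abs, abs_of_pos hq0, one_mul]
    rw [e1]
    have h2 : q^((k+n)*((k+n)-1)/2) ≤ q^(k*(k-1)/2) * q^(n*(n-1)/2) := by
      rw [← pow_add]
      apply pow_le_pow_of_le_one hq0.le hq1.le
      rw [tri_add]
      omega
    have h3 : ‖qPoch a (q:ℂ) k‖ ≤ (1+‖a‖)^k := norm_qPoch_le hq0 hq1 a k
    have h4 : δq * δq ≤ ‖qPoch (q:ℂ) (q:ℂ) k‖ * ‖qPoch (q:ℂ) (q:ℂ) n‖ :=
      mul_le_mul (hlbq k) (hlbq n) hδq.le (le_trans hδq.le (hlbq k))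
    calc q^((k+n)*((k+n)-1)/2) * ‖c/a‖^k * ‖c‖^n * ‖qPoch a (q:ℂ) k‖
        / (‖qPoch (q:ℂ) (q:ℂ) k‖ * ‖qPoch (q:ℂ) (q:ℂ) n‖)
        ≤ (q^(k*(k-1)/2) * q^(n*(n-1)/2)) * ‖c/a‖^k * ‖c‖^n * (1+‖a‖)^k / (δq * δq) := by
          apply div_le_div₀ (by positivity) ?_ (by positivity) h4
          have : (0:ℝ) ≤ ‖c/a‖^k * ‖c‖^n := by positivity
          calc q^((k+n)*((k+n)-1)/2) * ‖c/a‖^k * ‖c‖^n * ‖qPoch a (q:ℂ) k‖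
              ≤ q^((k+n)*((k+n)-1)/2) * ‖c/a‖^k * ‖c‖^n * (1+‖a‖)^k := by
                apply mul_le_mul_of_nonneg_left h3 (by positivity)
            _ ≤ (q^(k*(k-1)/2) * q^(n*(n-1)/2)) * ‖c/a‖^k * ‖c‖^n * (1+‖a‖)^k := by
                apply mul_le_mul_of_nonneg_right ?_ (by positivity)
                apply mul_le_mul_of_nonneg_right ?_ (by positivity)
                exact mul_le_mul_of_nonneg_right h2 (by positivity)
      _ = (δq⁻¹ * ((‖c/a‖ * (1+‖a‖))^k * q^(k*(k-1)/2)))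
        * (δq⁻¹ * (‖c‖^n * q^(n*(n-1)/2))) := by
          rw [mul_pow]
          field_simp
  have hg1 : Summable (fun k : ℕ => δq⁻¹ * ((‖c/a‖ * (1+‖a‖))^k * q^(k*(k-1)/2))) :=
    (summable_pow_mul hq0 hq1 (by positivity)).mul_left _
  have hg2 : Summable (fun n : ℕ => δq⁻¹ * (‖c‖^n * q^(n*(n-1)/2))) :=
    (summable_pow_mul hq0 hq1 (by positivity)).mul_left _
  have hFsum : Summable F := by
    apply Summable.of_norm_bounded ?_ hFnorm
    exact hg1.mul_of_nonneg hg2 (fun k => by positivity) (fun n => by positivity)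
  -- row identity : T k * qPochInf c = ∑' n, F (k, n)
  have hrow : ∀ k : ℕ, T k * qPochInf c (q:ℂ) = ∑' n, F (k, n) := by
    intro k
    have hck : ∀ j : ℕ, (1:ℂ) - (c * (q:ℂ)^k) * (q:ℂ)^j ≠ 0 := by
      intro j
      have h1 := hcfac (k+j)
      have h2 : (c * (q:ℂ)^k) * (q:ℂ)^j = c * (q:ℂ)^(k+j) := by rw [pow_add]; ring
      rw [h2]
      exact h1
    have hsplit : qPoch c (q:ℂ) k * qPochInf (c * (q:ℂ)^k) (q:ℂ) = qPochInf c (q:ℂ) := by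
      rw [qPochInf_eq_exp hq0 hq1 hcfac, qPochInf_eq_exp hq0 hq1 hck,
        qPoch_eq_exp hq0 hq1 hcfac k, ← Complex.exp_add]
      congr 1
      have hsum : Summable (fun j : ℕ => Complex.log (1 - c*(q:ℂ)^j)) :=
        (summable_norm_log hq0 hq1 c).of_norm
      rw [← Summable.sum_add_tsum_nat_add k hsum]
      congr 1
      apply tsum_congr
      intro i
      congr 1
      rw [pow_add]
      ring
    rw [← hsplit]
    have hEu : qPochInf (c * (q:ℂ)^k) (q:ℂ) = ∑' n, eterm q (c * (q:ℂ)^k) n :=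
      (euler hq0 hq1 _).symm
    rw [hEu]
    have hstep : T k * (qPoch c (q:ℂ) k * ∑' n, eterm q (c * (q:ℂ)^k) n)
        = (qPoch a (q:ℂ) k / qPoch (q:ℂ) (q:ℂ) k *
            ((-1:ℂ)^k * (q:ℂ)^(k*(k-1)/2) * (c/a)^k)) * ∑' n, eterm q (c * (q:ℂ)^k) n := by
      simp only [hT]
      have hck : qPoch c (q:ℂ) k ≠ 0 := qPoch_ne_zero hcfac k
      have hBB : qPoch c (q:ℂ) k * (qPoch c (q:ℂ) k)⁻¹ = 1 := mul_inv_cancel₀ hck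
      linear_combination (qPoch a (q:ℂ) k * (qPoch (q:ℂ) (q:ℂ) k)⁻¹ *
        ((-1:ℂ)^k * (q:ℂ)^(k*(k-1)/2) * (c/a)^k) *
        (∑' n, eterm q (c * (q:ℂ)^k) n)) * hBB
    rw [hstep, ← tsum_mul_left]
    apply tsum_congr
    intro n
    rw [eterm]
    have hqq : (q:ℂ)^((k+n)*((k+n)-1)/2) = (q:ℂ)^(k*(k-1)/2) * ((q:ℂ)^(n*(n-1)/2) * (q:ℂ)^(k*n)) := by
      rw [← pow_add, ← pow_add, tri_add]
    have hcq : (c * (q:ℂ)^k)^n = c^n * (q:ℂ)^(k*n) := by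
      rw [mul_pow, ← pow_mul]
    simp only [hF]
    rw [pow_add (-1:ℂ) k n, hqq, hcq]
    ring
  -- assemble
  rw [eq_div_iff hPc, ← tsum_mul_right]
  have hL : ∑' k, T k * qPochInf c (q:ℂ) = ∑' k, ∑' n, F (k, n) := tsum_congr hrow
  rw [hL]
  have hdouble : ∑' k, ∑' n, F (k, n) = ∑' p : ℕ × ℕ, F p :=
    (Summable.tsum_prod' hFsum hFsum.prod_factor).symm
  have hregroup : ∑' p : ℕ × ℕ, F p = ∑' N : ℕ, ∑ kl ∈ antidiagonal N, F kl := by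
    have hsig : Summable (F ∘ ⇑Finset.HasAntidiagonal.sigmaAntidiagonalEquivProd) :=
      Finset.HasAntidiagonal.sigmaAntidiagonalEquivProd.summable_iff.mpr hFsum
    calc ∑' p : ℕ × ℕ, F p
        = ∑' σ : Σ n : ℕ, {x // x ∈ antidiagonal n},
            (F ∘ ⇑Finset.HasAntidiagonal.sigmaAntidiagonalEquivProd) σ :=
          (Equiv.tsum_eq Finset.HasAntidiagonal.sigmaAntidiagonalEquivProd F).symm
      _ = ∑' (N : ℕ) (p : {x // x ∈ antidiagonal N}),
            (F ∘ ⇑Finset.HasAntidiagonal.sigmaAntidiagonalEquivProd) ⟨N, p⟩ :=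
          Summable.tsum_sigma' (fun n => (hasSum_fintype _).summable) hsig
      _ = ∑' N : ℕ, ∑ kl ∈ antidiagonal N, F kl := by
          refine tsum_congr fun N => ?_
          refine Eq.trans (tsum_congr fun p => ?_) (Finset.tsum_subtype (antidiagonal N) F)
          simp [Finset.HasAntidiagonal.sigmaAntidiagonalEquivProd]
  have hinner : ∀ N : ℕ, ∑ kl ∈ antidiagonal N, F kl = eterm q (c/a) N := by
    intro N
    rw [Nat.sum_antidiagonal_eq_sum_range_succ_mk]
    have hterm : ∀ k ∈ range (N+1), F (k, N-k)
        = ((-1:ℂ)^N * (q:ℂ)^(N*(N-1)/2) * c^N) *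
          (qPoch a (q:ℂ) k * (a⁻¹)^k / (qPoch (q:ℂ) (q:ℂ) k * qPoch (q:ℂ) (q:ℂ) (N-k))) := by
      intro k hk
      have hkle : k ≤ N := by have := mem_range.mp hk; omega
      have hkn : k + (N-k) = N := by omega
      have hpow : c^k * c^(N-k) = c^N := pow_mul_pow_sub c hkle
      simp only [hF]
      rw [hkn, div_eq_mul_inv c a, mul_pow, ← hpow]
      ring
    rw [Finset.sum_congr rfl hterm, ← Finset.mul_sum, vdm hq0 hq1 ha N, eterm]
    rw [div_eq_mul_inv c a, mul_pow]
    ring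
  rw [hdouble, hregroup, tsum_congr hinner]
  exact euler hq0 hq1 (c/a)

end QOPO

/-- The ₁φ₁ summation:
`₁φ₁(a; c; q, c/a) = Σ_{k=0}^∞ ((a;q)_k/((c;q)_k (q;q)_k)) (-1)^k q^{k(k-1)/2} (c/a)^k
  = (c/a;q)_∞/(c;q)_∞`. -/
theorem qOnePhiOne (q : ℝ) (hq0 : 0 < q) (hq1 : q < 1) (a c : ℂ) (ha : a ≠ 0)
    (hc : ∀ m : ℕ, c * (q : ℂ) ^ m ≠ 1) :
    ∑' k : ℕ,
      qPoch a (q : ℂ) k / (qPoch c (q : ℂ) k * qPoch (q : ℂ) (q : ℂ) k) *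
        ((-1 : ℂ) ^ k * (q : ℂ) ^ (k * (k - 1) / 2) * (c / a) ^ k)
      = qPochInf (c / a) (q : ℂ) / qPochInf c (q : ℂ) :=
  QOPO.main hq0 hq1 a c ha hc
end

section
/- In U_q(sl(2)), for all nonnegative integers m, n: e^m f^n = Σ_{k=0}^{min(m,n)} ([m]_q! [n]_q! / ([k]_q! [m-k]_q! [n-k]_q!)) f^{n-k} e^{m-k} ∏_{j=0}^{k-1} [h + m - n - k + 1 + j]_q, where [h+c]_q is interpreted via K = q^{h/4} as (q^{c/2} K^2 − q^{-c/2} K^{-2})/(q^{1/2} − q^{-1/2}). -/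
open Finset

/-- The q-number `[x]_q = (q^{x/2} - q^{-x/2})/(q^{1/2} - q^{-1/2})` (complex powers of `q > 0`). -/
noncomputable def qNumC (q : ℝ) (x : ℂ) : ℂ :=
  ((q : ℂ) ^ (x / 2) - (q : ℂ) ^ (-x / 2)) / ((q : ℂ) ^ ((1 : ℂ) / 2) - (q : ℂ) ^ (-(1 : ℂ) / 2))

/-- The q-factorial `[k]_q! = ∏_{j=1}^{k} [j]_q`. -/
noncomputable def qFacC (q : ℝ) (k : ℕ) : ℂ := ∏ j ∈ Icc 1 k, qNumC q j

/-- The generalized Cartan element `[h + c]_q`, interpreted via `K = q^{h/4}` as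
`(q^{c/2} K² - q^{-c/2} K'²)/(q^{1/2} - q^{-1/2})`. -/
noncomputable def hBrac (q : ℝ) {A : Type*} [Ring A] [Algebra ℂ A] (K K' : A) (c : ℂ) : A :=
  (((q : ℂ) ^ ((1 : ℂ) / 2) - (q : ℂ) ^ (-(1 : ℂ) / 2))⁻¹ : ℂ) •
    (((q : ℂ) ^ (c / 2)) • K ^ 2 - ((q : ℂ) ^ (-c / 2)) • K' ^ 2)

section Scalar

lemma qcne {q : ℝ} (hq0 : 0 < q) : (q : ℂ) ≠ 0 := by exact_mod_cast hq0.ne'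

lemma pne {q : ℝ} (hq0 : 0 < q) (x : ℂ) : (q : ℂ) ^ x ≠ 0 := by
  simp only [Ne, Complex.cpow_eq_zero_iff, not_and_or]
  exact Or.inl (qcne hq0)

lemma padd {q : ℝ} (hq0 : 0 < q) (x y : ℂ) : (q : ℂ) ^ (x + y) = (q : ℂ) ^ x * (q : ℂ) ^ y :=
  Complex.cpow_add x y (qcne hq0)

lemma pneg (q : ℝ) (x : ℂ) : (q : ℂ) ^ (-x) = ((q : ℂ) ^ x)⁻¹ := Complex.cpow_neg _ _

lemma pnatpow (q : ℝ) (j : ℕ) : (q : ℂ) ^ ((j : ℕ) : ℂ) = ((q ^ j : ℝ) : ℂ) := by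
  rw [Complex.cpow_natCast]; push_cast; ring

lemma phalf_sq {q : ℝ} (hq0 : 0 < q) (x : ℂ) :
    (q : ℂ) ^ (x / 2) * (q : ℂ) ^ (x / 2) = (q : ℂ) ^ x := by
  rw [← padd hq0]; norm_num

lemma pnat_ne_one {q : ℝ} (hq0 : 0 < q) (hroot : ∀ k : ℕ, 0 < k → q ^ k ≠ 1)
    (j : ℕ) (hj : 0 < j) : (q : ℂ) ^ ((j : ℕ) : ℂ) ≠ 1 := by
  rw [pnatpow]
  exact_mod_cast hroot j hj

lemma sne {q : ℝ} (hq0 : 0 < q) (hroot : ∀ k : ℕ, 0 < k → q ^ k ≠ 1) :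
    (q : ℂ) ^ ((1 : ℂ) / 2) - (q : ℂ) ^ (-(1 : ℂ) / 2) ≠ 0 := by
  intro h
  have h2 : (q : ℂ) ^ ((1 : ℂ) / 2) = (q : ℂ) ^ (-(1 : ℂ) / 2) := by linear_combination h
  have h3 : (q : ℂ) ^ ((1 : ℂ)) = 1 := by
    rw [← phalf_sq hq0]
    nth_rewrite 2 [h2]
    rw [show -(1:ℂ)/2 = -((1:ℂ)/2) by ring, pneg]
    exact mul_inv_cancel₀ (pne hq0 ((1:ℂ)/2))
  exact pnat_ne_one hq0 hroot 1 one_pos (by simpa using h3)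

lemma qNum_eq (q : ℝ) (x : ℂ) : qNumC q x =
    ((q : ℂ) ^ (x / 2) - ((q : ℂ) ^ (x / 2))⁻¹) /
      ((q : ℂ) ^ ((1 : ℂ) / 2) - (q : ℂ) ^ (-(1 : ℂ) / 2)) := by
  rw [qNumC, show -x / 2 = -(x / 2) by ring, pneg]

lemma qNum_ne {q : ℝ} (hq0 : 0 < q) (hroot : ∀ k : ℕ, 0 < k → q ^ k ≠ 1)
    (j : ℕ) (hj : 0 < j) : qNumC q (j : ℂ) ≠ 0 := by
  rw [qNum_eq]
  apply div_ne_zero _ (sne hq0 hroot)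
  intro h
  have h2 : (q : ℂ) ^ ((j : ℂ) / 2) = ((q : ℂ) ^ ((j : ℂ) / 2))⁻¹ := by linear_combination h
  have h3 : (q : ℂ) ^ ((j : ℂ)) = 1 := by
    rw [← phalf_sq hq0]
    nth_rewrite 2 [h2]
    exact mul_inv_cancel₀ (pne hq0 ((j : ℂ)/2))
  exact pnat_ne_one hq0 hroot j hj h3

lemma qNum_zero (q : ℝ) : qNumC q 0 = 0 := by
  have : (0 : ℂ) / 2 = 0 := by norm_num
  rw [qNumC]
  simp

lemma qFac_zero (q : ℝ) : qFacC q 0 = 1 := by simp [qFacC]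

lemma qFac_succ (q : ℝ) (k : ℕ) :
    qFacC q (k + 1) = qFacC q k * qNumC q ((k + 1 : ℕ) : ℂ) := by
  rw [qFacC, qFacC, Finset.prod_Icc_succ_top (by omega)]

lemma qFac_ne {q : ℝ} (hq0 : 0 < q) (hroot : ∀ k : ℕ, 0 < k → q ^ k ≠ 1)
    (k : ℕ) : qFacC q k ≠ 0 := by
  induction k with
  | zero => simp [qFac_zero]
  | succ n ih => rw [qFac_succ]; exact mul_ne_zero ih (qNum_ne hq0 hroot _ (by omega))

end Scalar
noncomputable def prodH (q : ℝ) {A : Type*} [Ring A] [Algebra ℂ A] (K K' : A) (c : ℂ) (k : ℕ) : A :=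
  ((List.range k).map (fun j => hBrac q K K' (c + j))).prod

section Alg

variable {q : ℝ} {A : Type*} [Ring A] [Algebra ℂ A] {e f K K' : A}

lemma eK_of (hq0 : 0 < q) (hKe : K * e = ((q : ℂ) ^ ((1 : ℂ) / 2)) • (e * K)) :
    e * K = (((q : ℂ) ^ ((1 : ℂ) / 2))⁻¹) • (K * e) := by
  rw [hKe, smul_smul, inv_mul_cancel₀ (pne hq0 _), one_smul]

lemma K'e_of (hq0 : 0 < q) (hKK' : K * K' = 1) (hK'K : K' * K = 1)
    (hKe : K * e = ((q : ℂ) ^ ((1 : ℂ) / 2)) • (e * K)) :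
    K' * e = (((q : ℂ) ^ ((1 : ℂ) / 2))⁻¹) • (e * K') := by
  have h1 : K' * e = K' * ((e * K) * K') := by
    rw [mul_assoc e K K', hKK', mul_one]
  rw [h1, eK_of hq0 hKe, smul_mul_assoc, mul_smul_comm]
  congr 1
  rw [← mul_assoc, ← mul_assoc, hK'K, one_mul]

lemma K2e_of (hq0 : 0 < q) (hKe : K * e = ((q : ℂ) ^ ((1 : ℂ) / 2)) • (e * K)) :
    K ^ 2 * e = ((q : ℂ) ^ (1 : ℂ)) • (e * K ^ 2) := by
  have : K ^ 2 * e = K * (K * e) := by rw [pow_two, mul_assoc]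
  rw [this, hKe, mul_smul_comm, ← mul_assoc, hKe, smul_mul_assoc, smul_smul,
    phalf_sq hq0 (1 : ℂ)]
  congr 1
  rw [mul_assoc, pow_two]

lemma K'2e_of (hq0 : 0 < q) (hKK' : K * K' = 1) (hK'K : K' * K = 1)
    (hKe : K * e = ((q : ℂ) ^ ((1 : ℂ) / 2)) • (e * K)) :
    K' ^ 2 * e = ((q : ℂ) ^ (-1 : ℂ)) • (e * K' ^ 2) := by
  have h := K'e_of hq0 hKK' hK'K hKe
  have h2 : K' ^ 2 * e = K' * (K' * e) := by rw [pow_two, mul_assoc]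
  rw [h2, h, mul_smul_comm, ← mul_assoc, h, smul_mul_assoc, smul_smul]
  have h3 : ((q : ℂ) ^ ((1 : ℂ) / 2))⁻¹ * ((q : ℂ) ^ ((1 : ℂ) / 2))⁻¹ = (q : ℂ) ^ (-1 : ℂ) := by
    rw [← mul_inv, phalf_sq hq0 (1 : ℂ), ← pneg]
  rw [h3]
  congr 1
  rw [mul_assoc, pow_two]
lemma fK_of (hq0 : 0 < q) (hKf : K * f = ((q : ℂ) ^ (-(1 : ℂ) / 2)) • (f * K)) :
    f * K = (((q : ℂ) ^ (-(1 : ℂ) / 2))⁻¹) • (K * f) := by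
  rw [hKf, smul_smul, inv_mul_cancel₀ (pne hq0 _), one_smul]

lemma K'f_of (hq0 : 0 < q) (hKK' : K * K' = 1) (hK'K : K' * K = 1)
    (hKf : K * f = ((q : ℂ) ^ (-(1 : ℂ) / 2)) • (f * K)) :
    K' * f = (((q : ℂ) ^ (-(1 : ℂ) / 2))⁻¹) • (f * K') := by
  have h1 : K' * f = K' * ((f * K) * K') := by
    rw [mul_assoc f K K', hKK', mul_one]
  rw [h1, fK_of hq0 hKf, smul_mul_assoc, mul_smul_comm]
  congr 1
  rw [← mul_assoc, ← mul_assoc, hK'K, one_mul]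

lemma K2f_of (hq0 : 0 < q) (hKf : K * f = ((q : ℂ) ^ (-(1 : ℂ) / 2)) • (f * K)) :
    K ^ 2 * f = ((q : ℂ) ^ (-1 : ℂ)) • (f * K ^ 2) := by
  have h2 : K ^ 2 * f = K * (K * f) := by rw [pow_two, mul_assoc]
  have h3 : (q : ℂ) ^ (-(1 : ℂ) / 2) * (q : ℂ) ^ (-(1 : ℂ) / 2) = (q : ℂ) ^ (-1 : ℂ) := by
    rw [← padd hq0]; norm_num
  rw [h2, hKf, mul_smul_comm, ← mul_assoc, hKf, smul_mul_assoc, smul_smul, h3]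
  congr 1
  rw [mul_assoc, pow_two]

lemma K'2f_of (hq0 : 0 < q) (hKK' : K * K' = 1) (hK'K : K' * K = 1)
    (hKf : K * f = ((q : ℂ) ^ (-(1 : ℂ) / 2)) • (f * K)) :
    K' ^ 2 * f = ((q : ℂ) ^ (1 : ℂ)) • (f * K' ^ 2) := by
  have h := K'f_of hq0 hKK' hK'K hKf
  have h2 : K' ^ 2 * f = K' * (K' * f) := by rw [pow_two, mul_assoc]
  have h3 : ((q : ℂ) ^ (-(1 : ℂ) / 2))⁻¹ * ((q : ℂ) ^ (-(1 : ℂ) / 2))⁻¹ = (q : ℂ) ^ (1 : ℂ) := by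
    rw [← mul_inv, ← padd hq0, show -(1:ℂ)/2 + -(1:ℂ)/2 = -(1:ℂ) by ring, pneg, inv_inv]
  rw [h2, h, mul_smul_comm, ← mul_assoc, h, smul_mul_assoc, smul_smul, h3]
  congr 1
  rw [mul_assoc, pow_two]
lemma hBrac_mul_e (hq0 : 0 < q) (hKK' : K * K' = 1) (hK'K : K' * K = 1)
    (hKe : K * e = ((q : ℂ) ^ ((1 : ℂ) / 2)) • (e * K)) (c : ℂ) :
    hBrac q K K' c * e = e * hBrac q K K' (c + 2) := by
  rw [hBrac, hBrac, smul_mul_assoc, sub_mul, smul_mul_assoc, smul_mul_assoc,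
    K2e_of hq0 hKe, K'2e_of hq0 hKK' hK'K hKe,
    mul_smul_comm, mul_sub, mul_smul_comm, mul_smul_comm]
  have hb1 : (q : ℂ) ^ ((c + 2) / 2) = (q : ℂ) ^ (c / 2) * (q : ℂ) ^ (1 : ℂ) := by
    rw [show (c + 2) / 2 = c / 2 + 1 by ring, padd hq0]
  have hb2 : (q : ℂ) ^ (-(c + 2) / 2) = (q : ℂ) ^ (-c / 2) * (q : ℂ) ^ (-1 : ℂ) := by
    rw [show -(c + 2) / 2 = -c / 2 + (-1) by ring, padd hq0]
  rw [hb1, hb2, ← smul_smul, ← smul_smul]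

lemma hBrac_mul_f (hq0 : 0 < q) (hKK' : K * K' = 1) (hK'K : K' * K = 1)
    (hKf : K * f = ((q : ℂ) ^ (-(1 : ℂ) / 2)) • (f * K)) (c : ℂ) :
    hBrac q K K' c * f = f * hBrac q K K' (c - 2) := by
  rw [hBrac, hBrac, smul_mul_assoc, sub_mul, smul_mul_assoc, smul_mul_assoc,
    K2f_of hq0 hKf, K'2f_of hq0 hKK' hK'K hKf,
    mul_smul_comm, mul_sub, mul_smul_comm, mul_smul_comm]
  have hb1 : (q : ℂ) ^ ((c - 2) / 2) = (q : ℂ) ^ (c / 2) * (q : ℂ) ^ (-1 : ℂ) := by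
    rw [show (c - 2) / 2 = c / 2 + (-1) by ring, padd hq0]
  have hb2 : (q : ℂ) ^ (-(c - 2) / 2) = (q : ℂ) ^ (-c / 2) * (q : ℂ) ^ (1 : ℂ) := by
    rw [show -(c - 2) / 2 = -c / 2 + 1 by ring, padd hq0]
  rw [hb1, hb2, ← smul_smul, ← smul_smul]

lemma hBrac_mul_epow (hq0 : 0 < q) (hKK' : K * K' = 1) (hK'K : K' * K = 1)
    (hKe : K * e = ((q : ℂ) ^ ((1 : ℂ) / 2)) • (e * K)) (c : ℂ) (a : ℕ) :
    hBrac q K K' c * e ^ a = e ^ a * hBrac q K K' (c + 2 * a) := by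
  induction a generalizing c with
  | zero => simp
  | succ b ih =>
      rw [pow_succ, ← mul_assoc, ih, mul_assoc, hBrac_mul_e hq0 hKK' hK'K hKe, ← mul_assoc,
        ← pow_succ]
      congr 2
      push_cast
      ring

lemma hK2K'2 (hKK' : K * K' = 1) : K ^ 2 * K' ^ 2 = 1 := by
  rw [pow_two, pow_two, mul_assoc, ← mul_assoc K K' K', hKK', one_mul, hKK']

lemma hK'2K2 (hK'K : K' * K = 1) : K' ^ 2 * K ^ 2 = 1 := by
  rw [pow_two, pow_two, mul_assoc, ← mul_assoc K' K K, hK'K, one_mul, hK'K]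

lemma hBrac_comm (hKK' : K * K' = 1) (hK'K : K' * K = 1) (c c' : ℂ) :
    hBrac q K K' c * hBrac q K K' c' = hBrac q K K' c' * hBrac q K K' c := by
  simp only [hBrac, smul_mul_assoc, mul_smul_comm, sub_mul, mul_sub, smul_sub, smul_smul,
    hK2K'2 hKK', hK'2K2 hK'K]
  match_scalars <;> ring

lemma prodH_zero (c : ℂ) : prodH q K K' c 0 = 1 := by simp [prodH]

lemma prodH_succ_back (c : ℂ) (k : ℕ) :
    prodH q K K' c (k + 1) = prodH q K K' c k * hBrac q K K' (c + k) := by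
  simp [prodH, List.range_succ]

lemma prodH_succ_front (c : ℂ) (k : ℕ) :
    prodH q K K' c (k + 1) = hBrac q K K' c * prodH q K K' (c + 1) k := by
  induction k generalizing c with
  | zero => simp [prodH_succ_back, prodH_zero]
  | succ b ih =>
      rw [prodH_succ_back, ih, prodH_succ_back, mul_assoc]
      congr 2
      push_cast
      ring

lemma hBrac_prodH_comm (hKK' : K * K' = 1) (hK'K : K' * K = 1) (c c' : ℂ) (k : ℕ) :
    hBrac q K K' c' * prodH q K K' c k = prodH q K K' c k * hBrac q K K' c' := by
  induction k with
  | zero => simp [prodH_zero]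
  | succ b ih =>
      rw [prodH_succ_back, ← mul_assoc, ih, mul_assoc, hBrac_comm hKK' hK'K, ← mul_assoc]

lemma hBrac_lin (hq0 : 0 < q) (α β γ a b c : ℂ)
    (h1 : α * (q : ℂ) ^ (a / 2) + β * (q : ℂ) ^ (b / 2) = γ * (q : ℂ) ^ (c / 2))
    (h2 : α * (q : ℂ) ^ (-a / 2) + β * (q : ℂ) ^ (-b / 2) = γ * (q : ℂ) ^ (-c / 2)) :
    α • hBrac q K K' a + β • hBrac q K K' b = γ • hBrac q K K' c := by
  simp only [hBrac, smul_sub, smul_smul]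
  match_scalars
  · linear_combination ((q : ℂ) ^ ((1 : ℂ) / 2) - (q : ℂ) ^ (-(1 : ℂ) / 2))⁻¹ * h1
  · linear_combination -((q : ℂ) ^ ((1 : ℂ) / 2) - (q : ℂ) ^ (-(1 : ℂ) / 2))⁻¹ * h2
lemma qdiv_helper {s a b c P Q R : ℂ} (h : a * P + b * Q = c * R) :
    a / s * P + b / s * Q = c / s * R := by
  rw [div_mul_eq_mul_div, div_mul_eq_mul_div, div_mul_eq_mul_div, ← add_div, h]

lemma hBrac_step (hq0 : 0 < q) (hroot : ∀ k : ℕ, 0 < k → q ^ k ≠ 1) (b : ℕ) :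
    hBrac q K K' 0 + qNumC q (b : ℂ) • hBrac q K K' (-1 - (b : ℂ)) =
      qNumC q ((b + 1 : ℕ) : ℂ) • hBrac q K K' (-(b : ℂ)) := by
  have hs := sne hq0 hroot
  have key := hBrac_lin (K := K) (K' := K') hq0 1 (qNumC q (b : ℂ)) (qNumC q ((b + 1 : ℕ) : ℂ))
    0 (-1 - (b : ℂ)) (-(b : ℂ)) ?_ ?_
  · rw [one_smul] at key; exact key
  · rw [show (1 : ℂ) * (q : ℂ) ^ ((0 : ℂ) / 2) =
        (((q : ℂ) ^ ((1 : ℂ) / 2) - (q : ℂ) ^ (-(1 : ℂ) / 2)) /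
          ((q : ℂ) ^ ((1 : ℂ) / 2) - (q : ℂ) ^ (-(1 : ℂ) / 2))) * (q : ℂ) ^ ((0 : ℂ) / 2) from by
            rw [div_self hs], qNumC, qNumC]
    apply qdiv_helper
    simp only [sub_mul, ← padd hq0]
    rw [show ((b + 1 : ℕ) : ℂ) / 2 + -(b : ℂ) / 2 = (1 : ℂ) / 2 + (0 : ℂ) / 2 by push_cast; ring,
      show (b : ℂ) / 2 + (-1 - (b : ℂ)) / 2 = -(1 : ℂ) / 2 + (0 : ℂ) / 2 by ring,
      show -((b + 1 : ℕ) : ℂ) / 2 + -(b : ℂ) / 2 = -(b : ℂ) / 2 + (-1 - (b : ℂ)) / 2 by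
        push_cast; ring]
    ring
  · rw [show (1 : ℂ) * (q : ℂ) ^ (-(0 : ℂ) / 2) =
        (((q : ℂ) ^ ((1 : ℂ) / 2) - (q : ℂ) ^ (-(1 : ℂ) / 2)) /
          ((q : ℂ) ^ ((1 : ℂ) / 2) - (q : ℂ) ^ (-(1 : ℂ) / 2))) * (q : ℂ) ^ (-(0 : ℂ) / 2) from by
            rw [div_self hs], qNumC, qNumC]
    apply qdiv_helper
    simp only [sub_mul, ← padd hq0]
    rw [show -((b + 1 : ℕ) : ℂ) / 2 + - -(b : ℂ) / 2 = -(1 : ℂ) / 2 + -(0 : ℂ) / 2 by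
        push_cast; ring,
      show -(b : ℂ) / 2 + -(-1 - (b : ℂ)) / 2 = (1 : ℂ) / 2 + -(0 : ℂ) / 2 by ring,
      show ((b + 1 : ℕ) : ℂ) / 2 + - -(b : ℂ) / 2 = (b : ℂ) / 2 + -(-1 - (b : ℂ)) / 2 by
        push_cast; ring]
    ring

lemma efpow (hq0 : 0 < q) (hroot : ∀ k : ℕ, 0 < k → q ^ k ≠ 1)
    (hKK' : K * K' = 1) (hK'K : K' * K = 1)
    (hKf : K * f = ((q : ℂ) ^ (-(1 : ℂ) / 2)) • (f * K))
    (hef : e * f - f * e = hBrac q K K' 0) :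
    ∀ b : ℕ, e * f ^ b = f ^ b * e + qNumC q (b : ℂ) • (f ^ (b - 1) * hBrac q K K' (1 - (b : ℂ))) := by
  have hef' : e * f = f * e + hBrac q K K' 0 :=
    (sub_eq_iff_eq_add.mp hef).trans (add_comm _ _)
  intro b
  induction b with
  | zero => simp [qNum_zero]
  | succ b ih =>
      have harg : (1 : ℂ) - (b : ℂ) - 2 = -1 - (b : ℂ) := by ring
      have hfix : qNumC q (b : ℂ) • (f ^ (b - 1) * (f * hBrac q K K' (-1 - (b : ℂ)))) =
          qNumC q (b : ℂ) • (f ^ b * hBrac q K K' (-1 - (b : ℂ))) := by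
        cases b with
        | zero => rw [Nat.cast_zero, qNum_zero, zero_smul, zero_smul]
        | succ c => rw [Nat.add_sub_cancel, ← mul_assoc, ← pow_succ]
      calc e * f ^ (b + 1) = (e * f ^ b) * f := by rw [pow_succ, ← mul_assoc]
        _ = f ^ b * (e * f) +
            qNumC q (b : ℂ) • (f ^ (b - 1) * (hBrac q K K' (1 - (b : ℂ)) * f)) := by
              rw [ih, add_mul, smul_mul_assoc, mul_assoc, mul_assoc]
        _ = f ^ (b + 1) * e + (f ^ b * hBrac q K K' 0 +
            qNumC q (b : ℂ) • (f ^ (b - 1) * (f * hBrac q K K' (-1 - (b : ℂ))))) := by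
              rw [hBrac_mul_f hq0 hKK' hK'K hKf, harg, hef', mul_add, ← mul_assoc, ← pow_succ,
                add_assoc]
        _ = f ^ (b + 1) * e + (f ^ b * hBrac q K K' 0 +
            qNumC q (b : ℂ) • (f ^ b * hBrac q K K' (-1 - (b : ℂ)))) := by rw [hfix]
        _ = f ^ (b + 1) * e +
            qNumC q ((b + 1 : ℕ) : ℂ) •
              (f ^ (b + 1 - 1) * hBrac q K K' (1 - ((b + 1 : ℕ) : ℂ))) := by
              rw [Nat.add_sub_cancel,
                show (1 : ℂ) - ((b + 1 : ℕ) : ℂ) = -(b : ℂ) by push_cast; ring,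
                ← mul_smul_comm, ← mul_add, hBrac_step hq0 hroot b, mul_smul_comm]

lemma keyH (hq0 : 0 < q) (hroot : ∀ k : ℕ, 0 < k → q ^ k ≠ 1) (μ ν κ : ℂ) :
    qNumC q (μ - κ) • hBrac q K K' (μ - ν - κ) +
      qNumC q (κ + 1) • hBrac q K K' (2 * μ - ν - κ + 1) =
    qNumC q (μ + 1) • hBrac q K K' (μ - ν + 1) := by
  apply hBrac_lin hq0
  · rw [qNumC, qNumC, qNumC]
    apply qdiv_helper
    simp only [sub_mul, ← padd hq0]
    rw [show (μ - κ) / 2 + (μ - ν - κ) / 2 = (2 * μ - ν - κ + 1) / 2 + -(κ + 1) / 2 by ring,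
      show (μ + 1) / 2 + (μ - ν + 1) / 2 = (κ + 1) / 2 + (2 * μ - ν - κ + 1) / 2 by ring,
      show -(μ + 1) / 2 + (μ - ν + 1) / 2 = -(μ - κ) / 2 + (μ - ν - κ) / 2 by ring]
    ring
  · rw [qNumC, qNumC, qNumC]
    apply qdiv_helper
    simp only [sub_mul, ← padd hq0]
    rw [show -(μ - κ) / 2 + -(μ - ν - κ) / 2 = -(2 * μ - ν - κ + 1) / 2 + (κ + 1) / 2 by ring,
      show -(μ + 1) / 2 + -(μ - ν + 1) / 2 = -(κ + 1) / 2 + -(2 * μ - ν - κ + 1) / 2 by ring,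
      show (μ + 1) / 2 + -(μ - ν + 1) / 2 = (μ - κ) / 2 + -(μ - ν - κ) / 2 by ring]
    ring

end Alg

noncomputable def Co (q : ℝ) (m n k : ℕ) : ℂ :=
  qFacC q m * qFacC q n / (qFacC q k * qFacC q (m - k) * qFacC q (n - k))

section Coeff

variable {q : ℝ}

lemma qFac_sub_succ (q : ℝ) {a b : ℕ} (h : b < a) :
    qFacC q (a - b) = qFacC q (a - b - 1) * qNumC q ((a - b : ℕ) : ℂ) := by
  conv_lhs => rw [show a - b = (a - b - 1) + 1 by omega]
  rw [qFac_succ, show a - b - 1 + 1 = a - b by omega]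

lemma Co_zero (hq0 : 0 < q) (hroot : ∀ k : ℕ, 0 < k → q ^ k ≠ 1) (m n : ℕ) :
    Co q m n 0 = 1 := by
  rw [Co, qFac_zero, Nat.sub_zero, Nat.sub_zero, one_mul]
  exact div_self (mul_ne_zero (qFac_ne hq0 hroot m) (qFac_ne hq0 hroot n))

lemma I_A (hq0 : 0 < q) (hroot : ∀ k : ℕ, 0 < k → q ^ k ≠ 1) (m n k : ℕ)
    (h1 : k + 1 ≤ m) (h2 : k + 1 ≤ n) :
    Co q m n (k + 1) =
      (Co q (m + 1) n (k + 1) / qNumC q ((m : ℂ) + 1)) * qNumC q ((m : ℂ) - (k : ℂ)) := by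
  rw [show (m : ℂ) - (k : ℂ) = ((m - k : ℕ) : ℂ) by rw [Nat.cast_sub (by omega)],
    show (m : ℂ) + 1 = ((m + 1 : ℕ) : ℂ) by push_cast; ring, Co, Co,
    show m + 1 - (k + 1) = m - k by omega, show m - (k + 1) = m - k - 1 by omega,
    show n - (k + 1) = n - k - 1 by omega, qFac_succ q m,
    qFac_sub_succ q (show k < m by omega)]
  have nz1 : qFacC q (k + 1) ≠ 0 := qFac_ne hq0 hroot _
  have nz2 : qFacC q (m - k - 1) ≠ 0 := qFac_ne hq0 hroot _
  have nz3 : qFacC q (n - k - 1) ≠ 0 := qFac_ne hq0 hroot _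
  have nzx2 : qNumC q ((m - k : ℕ) : ℂ) ≠ 0 := qNum_ne hq0 hroot _ (by omega)
  have nzx4 : qNumC q ((m + 1 : ℕ) : ℂ) ≠ 0 := qNum_ne hq0 hroot _ (by omega)
  rw [div_mul_eq_mul_div, div_mul_eq_mul_div, div_div,
    div_eq_div_iff (mul_ne_zero (mul_ne_zero nz1 nz2) nz3)
      (mul_ne_zero (mul_ne_zero (mul_ne_zero nz1 (mul_ne_zero nz2 nzx2)) nz3) nzx4)]
  ring

lemma I_B (hq0 : 0 < q) (hroot : ∀ k : ℕ, 0 < k → q ^ k ≠ 1) (m n k : ℕ)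
    (h1 : k + 1 ≤ m) (h2 : k + 1 ≤ n) :
    Co q m n k * qNumC q ((n - k : ℕ) : ℂ) =
      (Co q (m + 1) n (k + 1) / qNumC q ((m : ℂ) + 1)) * qNumC q ((k : ℂ) + 1) := by
  rw [show (k : ℂ) + 1 = ((k + 1 : ℕ) : ℂ) by push_cast; ring,
    show (m : ℂ) + 1 = ((m + 1 : ℕ) : ℂ) by push_cast; ring, Co, Co,
    show m + 1 - (k + 1) = m - k by omega, show n - (k + 1) = n - k - 1 by omega,
    qFac_succ q m, qFac_succ q k, qFac_sub_succ q (show k < n by omega)]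
  have nz1 : qFacC q k ≠ 0 := qFac_ne hq0 hroot _
  have nz2 : qFacC q (m - k) ≠ 0 := qFac_ne hq0 hroot _
  have nz3 : qFacC q (n - k - 1) ≠ 0 := qFac_ne hq0 hroot _
  have nzx1 : qNumC q ((k + 1 : ℕ) : ℂ) ≠ 0 := qNum_ne hq0 hroot _ (by omega)
  have nzx3 : qNumC q ((n - k : ℕ) : ℂ) ≠ 0 := qNum_ne hq0 hroot _ (by omega)
  have nzx4 : qNumC q ((m + 1 : ℕ) : ℂ) ≠ 0 := qNum_ne hq0 hroot _ (by omega)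
  rw [div_mul_eq_mul_div, div_mul_eq_mul_div, div_mul_eq_mul_div, div_div,
    div_eq_div_iff
      (mul_ne_zero (mul_ne_zero nz1 nz2) (mul_ne_zero nz3 nzx3))
      (mul_ne_zero (mul_ne_zero (mul_ne_zero (mul_ne_zero nz1 nzx1) nz2) nz3) nzx4)]
  ring

lemma I_top (hq0 : 0 < q) (hroot : ∀ k : ℕ, 0 < k → q ^ k ≠ 1) (m n : ℕ) (h : m < n) :
    Co q m n m * qNumC q ((n - m : ℕ) : ℂ) = Co q (m + 1) n (m + 1) := by
  rw [Co, Co, Nat.sub_self, show m + 1 - (m + 1) = 0 by omega,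
    show n - (m + 1) = n - m - 1 by omega, qFac_succ q m, qFac_sub_succ q h]
  have nz1 : qFacC q m ≠ 0 := qFac_ne hq0 hroot _
  have nz3 : qFacC q (n - m - 1) ≠ 0 := qFac_ne hq0 hroot _
  have nzx3 : qNumC q ((n - m : ℕ) : ℂ) ≠ 0 := qNum_ne hq0 hroot _ (by omega)
  have nzx4 : qNumC q ((m + 1 : ℕ) : ℂ) ≠ 0 := qNum_ne hq0 hroot _ (by omega)
  rw [qFac_zero, div_mul_eq_mul_div,
    div_eq_div_iff
      (mul_ne_zero (mul_ne_zero nz1 one_ne_zero) (mul_ne_zero nz3 nzx3))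
      (mul_ne_zero (mul_ne_zero (mul_ne_zero nz1 nzx4) one_ne_zero) nz3)]
  ring

end Coeff

section Main

variable {q : ℝ} {A : Type*} [Ring A] [Algebra ℂ A] {e f K K' : A}

lemma hkeyC (hq0 : 0 < q) (hroot : ∀ k : ℕ, 0 < k → q ^ k ≠ 1) (m n k : ℕ)
    (h1 : k + 1 ≤ m) (h2 : k + 1 ≤ n) :
    Co q m n (k + 1) • hBrac q K K' ((m : ℂ) - (n : ℂ) - (k : ℂ)) +
      (Co q m n k * qNumC q ((n - k : ℕ) : ℂ)) •
        hBrac q K K' (2 * (m : ℂ) - (n : ℂ) - (k : ℂ) + 1) =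
    Co q (m + 1) n (k + 1) • hBrac q K K' ((m : ℂ) - (n : ℂ) + 1) := by
  rw [I_A hq0 hroot m n k h1 h2, I_B hq0 hroot m n k h1 h2, mul_smul, mul_smul, ← smul_add,
    keyH hq0 hroot (m : ℂ) (n : ℂ) (k : ℂ), ← mul_smul, div_mul_cancel₀]
  rw [show (m : ℂ) + 1 = ((m + 1 : ℕ) : ℂ) by push_cast; ring]
  exact qNum_ne hq0 hroot _ (by omega)

lemma assemble (CA CB C' : ℂ) (Ha Hb Hc Q X : A)
    (hkey : CA • Ha + CB • Hb = C' • Hc) (hcomm : Hc * Q = Q * Hc) :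
    CA • (X * (Ha * Q)) + CB • (X * (Hb * Q)) = C' • (X * (Q * Hc)) := by
  calc CA • (X * (Ha * Q)) + CB • (X * (Hb * Q))
      = X * ((CA • Ha + CB • Hb) * Q) := by
        rw [add_mul, smul_mul_assoc, smul_mul_assoc, mul_add, mul_smul_comm, mul_smul_comm]
    _ = X * ((C' • Hc) * Q) := by rw [hkey]
    _ = C' • (X * (Q * Hc)) := by rw [smul_mul_assoc, hcomm, mul_smul_comm]

lemma expand_term (hq0 : 0 < q) (hroot : ∀ k : ℕ, 0 < k → q ^ k ≠ 1)
    (hKK' : K * K' = 1) (hK'K : K' * K = 1)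
    (hKe : K * e = ((q : ℂ) ^ ((1 : ℂ) / 2)) • (e * K))
    (hKf : K * f = ((q : ℂ) ^ (-(1 : ℂ) / 2)) • (f * K))
    (hef : e * f - f * e = hBrac q K K' 0)
    (m n k : ℕ) (hkm : k ≤ m) (hkn : k ≤ n) (c : ℂ) :
    e * (f ^ (n - k) * e ^ (m - k) * prodH q K K' c k) =
      f ^ (n - k) * e ^ (m + 1 - k) * prodH q K K' c k +
        qNumC q ((n - k : ℕ) : ℂ) •
          (f ^ (n - k - 1) * e ^ (m - k) *
            (hBrac q K K' (2 * (m : ℂ) - (n : ℂ) - (k : ℂ) + 1) * prodH q K K' c k)) := by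
  rw [← mul_assoc, ← mul_assoc, efpow hq0 hroot hKK' hK'K hKf hef (n - k), add_mul, add_mul,
    smul_mul_assoc, smul_mul_assoc]
  congr 1
  · rw [mul_assoc (f ^ (n - k)) e (e ^ (m - k)), ← pow_succ',
      show m - k + 1 = m + 1 - k by omega]
  · congr 1
    rw [mul_assoc (f ^ (n - k - 1)) _ (e ^ (m - k)),
      hBrac_mul_epow hq0 hKK' hK'K hKe,
      show (1 : ℂ) - ((n - k : ℕ) : ℂ) + 2 * ((m - k : ℕ) : ℂ) =
        2 * (m : ℂ) - (n : ℂ) - (k : ℂ) + 1 by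
          rw [Nat.cast_sub hkn, Nat.cast_sub hkm]; ring,
      ← mul_assoc, mul_assoc (f ^ (n - k - 1) * e ^ (m - k))]

lemma comb (hq0 : 0 < q) (hroot : ∀ k : ℕ, 0 < k → q ^ k ≠ 1)
    (hKK' : K * K' = 1) (hK'K : K' * K = 1) (m n k : ℕ)
    (h1 : k + 1 ≤ m) (h2 : k + 1 ≤ n) :
    Co q (m + 1) n (k + 1) •
      (f ^ (n - (k + 1)) * e ^ (m + 1 - (k + 1)) *
        prodH q K K' (((m + 1 : ℕ) : ℂ) - (n : ℂ) - ((k + 1 : ℕ) : ℂ) + 1) (k + 1)) =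
    Co q m n (k + 1) •
      (f ^ (n - (k + 1)) * e ^ (m + 1 - (k + 1)) *
        prodH q K K' ((m : ℂ) - (n : ℂ) - ((k + 1 : ℕ) : ℂ) + 1) (k + 1)) +
    (Co q m n k * qNumC q ((n - k : ℕ) : ℂ)) •
      (f ^ (n - k - 1) * e ^ (m - k) *
        (hBrac q K K' (2 * (m : ℂ) - (n : ℂ) - (k : ℂ) + 1) *
          prodH q K K' ((m : ℂ) - (n : ℂ) - (k : ℂ) + 1) k)) := by
  rw [show n - (k + 1) = n - k - 1 by omega, show m + 1 - (k + 1) = m - k by omega,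
    prodH_succ_back, prodH_succ_front,
    show ((m + 1 : ℕ) : ℂ) - (n : ℂ) - ((k + 1 : ℕ) : ℂ) + 1 =
      (m : ℂ) - (n : ℂ) - (k : ℂ) + 1 by push_cast; ring,
    show (m : ℂ) - (n : ℂ) - (k : ℂ) + 1 + (k : ℂ) = (m : ℂ) - (n : ℂ) + 1 by ring,
    show (m : ℂ) - (n : ℂ) - ((k + 1 : ℕ) : ℂ) + 1 = (m : ℂ) - (n : ℂ) - (k : ℂ) by
      push_cast; ring]
  exact (assemble _ _ _ _ _ _ _ _ (hkeyC hq0 hroot m n k h1 h2)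
    (hBrac_prodH_comm hKK' hK'K _ _ _)).symm

lemma topterm (hq0 : 0 < q) (hroot : ∀ k : ℕ, 0 < k → q ^ k ≠ 1)
    (hKK' : K * K' = 1) (hK'K : K' * K = 1) (m n : ℕ) (h : m < n) :
    (Co q m n m * qNumC q ((n - m : ℕ) : ℂ)) •
      (f ^ (n - m - 1) * e ^ (m - m) *
        (hBrac q K K' (2 * (m : ℂ) - (n : ℂ) - (m : ℂ) + 1) *
          prodH q K K' ((m : ℂ) - (n : ℂ) - (m : ℂ) + 1) m)) =
    Co q (m + 1) n (m + 1) •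
      (f ^ (n - (m + 1)) * e ^ (m + 1 - (m + 1)) *
        prodH q K K' (((m + 1 : ℕ) : ℂ) - (n : ℂ) - ((m + 1 : ℕ) : ℂ) + 1) (m + 1)) := by
  rw [show n - (m + 1) = n - m - 1 by omega, show m + 1 - (m + 1) = 0 by omega,
    show m - m = 0 by omega, prodH_succ_back,
    show ((m + 1 : ℕ) : ℂ) - (n : ℂ) - ((m + 1 : ℕ) : ℂ) + 1 =
      (m : ℂ) - (n : ℂ) - (m : ℂ) + 1 by push_cast; ring,
    show (m : ℂ) - (n : ℂ) - (m : ℂ) + 1 + (m : ℂ) = 2 * (m : ℂ) - (n : ℂ) - (m : ℂ) + 1 by ring,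
    I_top hq0 hroot m n h, hBrac_prodH_comm hKK' hK'K]

end Main
section Final

variable {q : ℝ} {A : Type*} [Ring A] [Algebra ℂ A] {e f K K' : A}

lemma step (hq0 : 0 < q) (hroot : ∀ k : ℕ, 0 < k → q ^ k ≠ 1)
    (hKK' : K * K' = 1) (hK'K : K' * K = 1)
    (hKe : K * e = ((q : ℂ) ^ ((1 : ℂ) / 2)) • (e * K))
    (hKf : K * f = ((q : ℂ) ^ (-(1 : ℂ) / 2)) • (f * K))
    (hef : e * f - f * e = hBrac q K K' 0) (m n : ℕ)
    (ih : e ^ m * f ^ n = ∑ k ∈ Finset.range (min m n + 1),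
      Co q m n k • (f ^ (n - k) * e ^ (m - k) *
        prodH q K K' ((m : ℂ) - (n : ℂ) - (k : ℂ) + 1) k)) :
    e ^ (m + 1) * f ^ n = ∑ k ∈ Finset.range (min (m + 1) n + 1),
      Co q (m + 1) n k • (f ^ (n - k) * e ^ (m + 1 - k) *
        prodH q K K' (((m + 1 : ℕ) : ℂ) - (n : ℂ) - (k : ℂ) + 1) k) := by
  have hsplit : e ^ (m + 1) * f ^ n =
      (∑ k ∈ Finset.range (min m n + 1),
        Co q m n k • (f ^ (n - k) * e ^ (m + 1 - k) *
          prodH q K K' ((m : ℂ) - (n : ℂ) - (k : ℂ) + 1) k)) +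
      (∑ k ∈ Finset.range (min m n + 1),
        (Co q m n k * qNumC q ((n - k : ℕ) : ℂ)) •
          (f ^ (n - k - 1) * e ^ (m - k) *
            (hBrac q K K' (2 * (m : ℂ) - (n : ℂ) - (k : ℂ) + 1) *
              prodH q K K' ((m : ℂ) - (n : ℂ) - (k : ℂ) + 1) k))) := by
    rw [pow_succ', mul_assoc, ih, Finset.mul_sum, ← Finset.sum_add_distrib]
    refine Finset.sum_congr rfl fun k hk => ?_
    have hkm : k ≤ m := by
      have := Finset.mem_range.mp hk; omega
    have hkn : k ≤ n := by
      have := Finset.mem_range.mp hk; omega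
    rw [mul_smul_comm,
      expand_term hq0 hroot hKK' hK'K hKe hKf hef m n k hkm hkn _, smul_add, smul_smul]
  rw [hsplit]
  rcases le_or_gt n m with hc | hc
  · rw [min_eq_right hc, min_eq_right (show n ≤ m + 1 by omega)]
    rw [Finset.sum_range_succ
      (fun k => (Co q m n k * qNumC q ((n - k : ℕ) : ℂ)) •
        (f ^ (n - k - 1) * e ^ (m - k) *
          (hBrac q K K' (2 * (m : ℂ) - (n : ℂ) - (k : ℂ) + 1) *
            prodH q K K' ((m : ℂ) - (n : ℂ) - (k : ℂ) + 1) k))) n]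
    rw [Nat.sub_self, Nat.cast_zero, qNum_zero, mul_zero, zero_smul, add_zero]
    rw [Finset.sum_range_succ' (fun k =>
      Co q (m + 1) n k • (f ^ (n - k) * e ^ (m + 1 - k) *
        prodH q K K' (((m + 1 : ℕ) : ℂ) - (n : ℂ) - (k : ℂ) + 1) k)) n]
    rw [Finset.sum_range_succ' (fun k =>
      Co q m n k • (f ^ (n - k) * e ^ (m + 1 - k) *
        prodH q K K' ((m : ℂ) - (n : ℂ) - (k : ℂ) + 1) k)) n]
    have h0 : Co q m n 0 • (f ^ (n - 0) * e ^ (m + 1 - 0) *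
        prodH q K K' ((m : ℂ) - (n : ℂ) - ((0 : ℕ) : ℂ) + 1) 0) =
        Co q (m + 1) n 0 • (f ^ (n - 0) * e ^ (m + 1 - 0) *
          prodH q K K' (((m + 1 : ℕ) : ℂ) - (n : ℂ) - ((0 : ℕ) : ℂ) + 1) 0) := by
      rw [Co_zero hq0 hroot, Co_zero hq0 hroot, prodH_zero, prodH_zero]
    rw [add_right_comm, h0]
    congr 1
    rw [← Finset.sum_add_distrib]
    refine Finset.sum_congr rfl fun k hk => ?_
    have hk' : k + 1 ≤ n := by have := Finset.mem_range.mp hk; omega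
    exact (comb hq0 hroot hKK' hK'K m n k (by omega) hk').symm
  · rw [min_eq_left (show m ≤ n by omega), min_eq_left (show m + 1 ≤ n by omega)]
    rw [Finset.sum_range_succ (fun k =>
      Co q (m + 1) n k • (f ^ (n - k) * e ^ (m + 1 - k) *
        prodH q K K' (((m + 1 : ℕ) : ℂ) - (n : ℂ) - (k : ℂ) + 1) k)) (m + 1)]
    rw [Finset.sum_range_succ' (fun k =>
      Co q (m + 1) n k • (f ^ (n - k) * e ^ (m + 1 - k) *
        prodH q K K' (((m + 1 : ℕ) : ℂ) - (n : ℂ) - (k : ℂ) + 1) k)) m]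
    rw [Finset.sum_range_succ' (fun k =>
      Co q m n k • (f ^ (n - k) * e ^ (m + 1 - k) *
        prodH q K K' ((m : ℂ) - (n : ℂ) - (k : ℂ) + 1) k)) m]
    rw [Finset.sum_range_succ
      (fun k => (Co q m n k * qNumC q ((n - k : ℕ) : ℂ)) •
        (f ^ (n - k - 1) * e ^ (m - k) *
          (hBrac q K K' (2 * (m : ℂ) - (n : ℂ) - (k : ℂ) + 1) *
            prodH q K K' ((m : ℂ) - (n : ℂ) - (k : ℂ) + 1) k))) m]
    have h0 : Co q m n 0 • (f ^ (n - 0) * e ^ (m + 1 - 0) *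
        prodH q K K' ((m : ℂ) - (n : ℂ) - ((0 : ℕ) : ℂ) + 1) 0) =
        Co q (m + 1) n 0 • (f ^ (n - 0) * e ^ (m + 1 - 0) *
          prodH q K K' (((m + 1 : ℕ) : ℂ) - (n : ℂ) - ((0 : ℕ) : ℂ) + 1) 0) := by
      rw [Co_zero hq0 hroot, Co_zero hq0 hroot, prodH_zero, prodH_zero]
    have htop := topterm (e := e) (f := f) hq0 hroot hKK' hK'K m n hc
    have hsum : (∑ k ∈ Finset.range m, Co q m n (k + 1) •
          (f ^ (n - (k + 1)) * e ^ (m + 1 - (k + 1)) *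
            prodH q K K' ((m : ℂ) - (n : ℂ) - ((k + 1 : ℕ) : ℂ) + 1) (k + 1))) +
        (∑ k ∈ Finset.range m, (Co q m n k * qNumC q ((n - k : ℕ) : ℂ)) •
          (f ^ (n - k - 1) * e ^ (m - k) *
            (hBrac q K K' (2 * (m : ℂ) - (n : ℂ) - (k : ℂ) + 1) *
              prodH q K K' ((m : ℂ) - (n : ℂ) - (k : ℂ) + 1) k))) =
        ∑ k ∈ Finset.range m, Co q (m + 1) n (k + 1) •
          (f ^ (n - (k + 1)) * e ^ (m + 1 - (k + 1)) *
            prodH q K K' (((m + 1 : ℕ) : ℂ) - (n : ℂ) - ((k + 1 : ℕ) : ℂ) + 1) (k + 1)) := by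
      rw [← Finset.sum_add_distrib]
      refine Finset.sum_congr rfl fun k hk => ?_
      have hk' : k + 1 ≤ m := by have := Finset.mem_range.mp hk; omega
      exact (comb hq0 hroot hKK' hK'K m n k hk' (by omega)).symm
    rw [add_add_add_comm, hsum, h0, htop, ← add_assoc]

end Final


set_option maxHeartbeats 1000000 in
/-- In `U_q(sl(2))`:
`e^m f^n = Σ_{k=0}^{min(m,n)} ([m]_q![n]_q!/([k]_q![m-k]_q![n-k]_q!)) f^{n-k} e^{m-k}
  ∏_{j=0}^{k-1} [h + m - n - k + 1 + j]_q`. -/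
theorem uqsl2_epow_fpow (q : ℝ) (hq0 : 0 < q) (hq1 : q < 1)
    (hroot : ∀ k : ℕ, 0 < k → q ^ k ≠ 1)
    (A : Type*) [Ring A] [Algebra ℂ A] (e f K K' : A)
    (hKK' : K * K' = 1) (hK'K : K' * K = 1)
    (hKe : K * e = ((q : ℂ) ^ ((1 : ℂ) / 2)) • (e * K))
    (hKf : K * f = ((q : ℂ) ^ (-(1 : ℂ) / 2)) • (f * K))
    (hef : e * f - f * e = hBrac q K K' 0) :
    ∀ m n : ℕ, e ^ m * f ^ n =
      ∑ k ∈ range (min m n + 1),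
        (qFacC q m * qFacC q n / (qFacC q k * qFacC q (m - k) * qFacC q (n - k))) •
          (f ^ (n - k) * e ^ (m - k) *
            ((List.range k).map
              (fun j => hBrac q K K' ((m : ℂ) - (n : ℂ) - (k : ℂ) + 1 + (j : ℂ)))).prod) := by
  intro m n
  have key : ∀ m : ℕ, e ^ m * f ^ n = ∑ k ∈ Finset.range (min m n + 1),
      Co q m n k • (f ^ (n - k) * e ^ (m - k) *
        prodH q K K' ((m : ℂ) - (n : ℂ) - (k : ℂ) + 1) k) := by
    intro m
    induction m with
    | zero =>
        rw [Nat.zero_min, Finset.sum_range_one]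
        simp only [Nat.sub_zero, Nat.sub_self, pow_zero, one_mul, mul_one, prodH_zero,
          Co_zero hq0 hroot, one_smul]
    | succ m ihm =>
        have hs := step hq0 hroot hKK' hK'K hKe hKf hef m n ihm
        convert hs using 3 with k
  exact key m
end

section
/- Shapovalov form on a Verma module: on M_{q,λ} there is a unique symmetric bilinear form ⟨·,·⟩ with ⟨x_λ, x_λ⟩ = 1 satisfying ⟨e·v, w⟩ = ⟨v, f·w⟩ and ⟨h·v, w⟩ = ⟨v, h·w⟩, and it is given explicitly by ⟨f^n·x_λ, f^m·x_λ⟩ = δ_{m,n} (−1)^n [n]_q! ([−λ]_q)_n. -/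
open Finset

/-- The shifted q-Pochhammer `([a]_q)_k = ∏_{j=0}^{k-1} [a+j]_q`. -/
noncomputable def qShiftC (q : ℝ) (a : ℂ) (k : ℕ) : ℂ := ∏ j ∈ range k, qNumC q (a + j)

/-- Extend a map on basis vectors (the basis `n ↦ f^n·x_λ` of the Verma module `M_{q,λ}`,
modelled as `ℕ →₀ ℂ`) to a linear endomorphism. -/
noncomputable def opOf (g : ℕ → (ℕ →₀ ℂ)) : (ℕ →₀ ℂ) →ₗ[ℂ] (ℕ →₀ ℂ) :=
  Finsupp.lsum ℂ fun n => LinearMap.toSpanSingleton ℂ (ℕ →₀ ℂ) (g n)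

/-- Action of `e` on `M_{q,λ}`: `e·f^n x_λ = [n]_q [λ-n+1]_q f^{n-1} x_λ`. -/
noncomputable def vermaE (q : ℝ) (lam : ℂ) : (ℕ →₀ ℂ) →ₗ[ℂ] (ℕ →₀ ℂ) :=
  opOf fun n => (qNumC q n * qNumC q (lam - n + 1)) • Finsupp.single (n - 1) 1

/-- Action of `f` on `M_{q,λ}`: `f·f^n x_λ = f^{n+1} x_λ`. -/
noncomputable def vermaF : (ℕ →₀ ℂ) →ₗ[ℂ] (ℕ →₀ ℂ) :=
  opOf fun n => Finsupp.single (n + 1) 1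

/-- Action of `h` on `M_{q,λ}`: `h·f^n x_λ = (λ-2n) f^n x_λ`. -/
noncomputable def vermaH (lam : ℂ) : (ℕ →₀ ℂ) →ₗ[ℂ] (ℕ →₀ ℂ) :=
  opOf fun n => (lam - 2 * n) • Finsupp.single n 1

/-!
Self-adjointness of `h` makes distinct weight spaces `ℂ·f^n x_λ` orthogonal, since the weights
`λ - 2n` are distinct. Adjointness of `e` and `f` then gives the recursion
`⟨f^{n+1}x_λ, f^{n+1}x_λ⟩ = [n+1]_q [λ-n]_q ⟨f^n x_λ, f^n x_λ⟩`, and `[λ-n]_q = -[-λ+n]_q`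
produces the sign and the shifted factorial. Conversely, the diagonal form with these values
satisfies all the relations on basis vectors, hence everywhere by bilinearity.
-/

section FinsuppBilinear

variable {ι R : Type*} [CommSemiring R] {B : (ι →₀ R) →ₗ[R] (ι →₀ R) →ₗ[R] R}

theorem bilin_ext_single {C : (ι →₀ R) →ₗ[R] (ι →₀ R) →ₗ[R] R}
    (h : ∀ i j, B (Finsupp.single i 1) (Finsupp.single j 1) =
      C (Finsupp.single i 1) (Finsupp.single j 1)) : B = C :=
  LinearMap.ext_basis Finsupp.basisSingleOne Finsupp.basisSingleOne (by simpa using h)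

theorem bilin_comm_of_single
    (h : ∀ i j, B (Finsupp.single i 1) (Finsupp.single j 1) =
      B (Finsupp.single j 1) (Finsupp.single i 1)) (v w : ι →₀ R) : B v w = B w v :=
  LinearMap.congr_fun₂ (bilin_ext_single (C := B.flip) h) v w

theorem bilin_adjoint_of_single {S T : (ι →₀ R) →ₗ[R] (ι →₀ R)}
    (h : ∀ i j, B (S (Finsupp.single i 1)) (Finsupp.single j 1) =
      B (Finsupp.single i 1) (T (Finsupp.single j 1))) (v w : ι →₀ R) :
    B (S v) w = B v (T w) :=
  LinearMap.congr_fun₂ (bilin_ext_single (B := B.comp S) (C := B.compl₂ T) h) v w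

end FinsuppBilinear

theorem opOf_single (g : ℕ → (ℕ →₀ ℂ)) (n : ℕ) : opOf g (Finsupp.single n 1) = g n := by
  simp [opOf]

theorem vermaE_single_succ (q : ℝ) (lam : ℂ) (n : ℕ) :
    vermaE q lam (Finsupp.single (n + 1) 1) =
      (qNumC q (n + 1) * qNumC q (lam - n)) • Finsupp.single n 1 := by
  rw [vermaE, opOf_single, Nat.add_sub_cancel]
  push_cast
  ring_nf

theorem vermaE_single_zero (q : ℝ) (lam : ℂ) : vermaE q lam (Finsupp.single 0 1) = 0 := by
  simp [vermaE, opOf_single, qNumC]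

theorem vermaF_single (n : ℕ) : vermaF (Finsupp.single n 1) = Finsupp.single (n + 1) 1 :=
  opOf_single _ n

theorem vermaH_single (lam : ℂ) (n : ℕ) :
    vermaH lam (Finsupp.single n 1) = (lam - 2 * n) • Finsupp.single n 1 :=
  opOf_single _ n

theorem qNumC_neg (q : ℝ) (x : ℂ) : qNumC q (-x) = -qNumC q x := by
  rw [qNumC, qNumC, neg_neg]
  ring

noncomputable def shapovalovCoeff (q : ℝ) (lam : ℂ) (n : ℕ) : ℂ :=
  (-1 : ℂ) ^ n * qFacC q n * qShiftC q (-lam) n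

theorem shapovalovCoeff_zero (q : ℝ) (lam : ℂ) : shapovalovCoeff q lam 0 = 1 := by
  simp [shapovalovCoeff, qFacC, qShiftC]

theorem shapovalovCoeff_succ (q : ℝ) (lam : ℂ) (n : ℕ) :
    shapovalovCoeff q lam (n + 1) =
      qNumC q (n + 1) * qNumC q (lam - n) * shapovalovCoeff q lam n := by
  have hneg : qNumC q (-lam + n) = -qNumC q (lam - n) := by
    rw [← qNumC_neg, neg_sub, sub_eq_neg_add]
  rw [shapovalovCoeff, shapovalovCoeff, qFacC, qFacC, qShiftC, qShiftC,
    prod_Icc_succ_top (by omega), prod_range_succ, hneg]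
  push_cast
  ring

noncomputable def shapovalovForm (q : ℝ) (lam : ℂ) : (ℕ →₀ ℂ) →ₗ[ℂ] (ℕ →₀ ℂ) →ₗ[ℂ] ℂ :=
  Finsupp.lsum ℂ fun n =>
    LinearMap.toSpanSingleton ℂ ((ℕ →₀ ℂ) →ₗ[ℂ] ℂ) (shapovalovCoeff q lam n • Finsupp.lapply n)

theorem shapovalovForm_single_single (q : ℝ) (lam : ℂ) (n m : ℕ) :
    shapovalovForm q lam (Finsupp.single n 1) (Finsupp.single m 1) =
      if m = n then shapovalovCoeff q lam n else 0 := by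
  simp [shapovalovForm, Finsupp.single_apply]

section Invariance

variable {q : ℝ} {lam : ℂ} {B : (ℕ →₀ ℂ) →ₗ[ℂ] (ℕ →₀ ℂ) →ₗ[ℂ] ℂ}

theorem apply_single_single_of_ne (hH : ∀ v w, B (vermaH lam v) w = B v (vermaH lam w))
    {n m : ℕ} (hnm : m ≠ n) : B (Finsupp.single n 1) (Finsupp.single m 1) = 0 := by
  have hweight := hH (Finsupp.single n 1) (Finsupp.single m 1)
  simp only [vermaH_single, map_smul, LinearMap.smul_apply, smul_eq_mul] at hweight
  have hne : (lam - 2 * n) - (lam - 2 * m) ≠ 0 := by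
    intro h
    exact hnm (by exact_mod_cast (by linear_combination h / 2 : (m : ℂ) = n))
  exact (mul_eq_zero.mp (by linear_combination hweight)).resolve_left hne

theorem apply_single_self (h1 : B (Finsupp.single 0 1) (Finsupp.single 0 1) = 1)
    (hE : ∀ v w, B (vermaE q lam v) w = B v (vermaF w)) (n : ℕ) :
    B (Finsupp.single n 1) (Finsupp.single n 1) = shapovalovCoeff q lam n := by
  induction n with
  | zero => rw [h1, shapovalovCoeff_zero]
  | succ k ih =>
    calc B (Finsupp.single (k + 1) 1) (Finsupp.single (k + 1) 1)
        = B (Finsupp.single (k + 1) 1) (vermaF (Finsupp.single k 1)) := by rw [vermaF_single]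
      _ = B (vermaE q lam (Finsupp.single (k + 1) 1)) (Finsupp.single k 1) := (hE _ _).symm
      _ = shapovalovCoeff q lam (k + 1) := by
        rw [vermaE_single_succ, map_smul, LinearMap.smul_apply, smul_eq_mul, ih,
          shapovalovCoeff_succ]

theorem apply_single_single (h1 : B (Finsupp.single 0 1) (Finsupp.single 0 1) = 1)
    (hE : ∀ v w, B (vermaE q lam v) w = B v (vermaF w))
    (hH : ∀ v w, B (vermaH lam v) w = B v (vermaH lam w)) (n m : ℕ) :
    B (Finsupp.single n 1) (Finsupp.single m 1) =
      if m = n then shapovalovCoeff q lam n else 0 := by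
  split_ifs with hmn
  · rw [hmn, apply_single_self h1 hE]
  · exact apply_single_single_of_ne hH hmn

end Invariance

theorem shapovalovForm_comm (q : ℝ) (lam : ℂ) (v w : ℕ →₀ ℂ) :
    shapovalovForm q lam v w = shapovalovForm q lam w v :=
  bilin_comm_of_single (fun n m => by
    simp only [shapovalovForm_single_single, eq_comm (a := m)]
    split_ifs with h <;> simp [h]) v w

theorem shapovalovForm_vermaE (q : ℝ) (lam : ℂ) (v w : ℕ →₀ ℂ) :
    shapovalovForm q lam (vermaE q lam v) w = shapovalovForm q lam v (vermaF w) := by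
  refine bilin_adjoint_of_single (fun n m => ?_) v w
  rw [vermaF_single]
  cases n with
  | zero => simp [vermaE_single_zero, shapovalovForm_single_single]
  | succ k =>
    simp only [vermaE_single_succ, map_smul, LinearMap.smul_apply, smul_eq_mul,
      shapovalovForm_single_single, add_left_inj]
    split_ifs with h
    · rw [shapovalovCoeff_succ]
    · rw [mul_zero]

theorem shapovalovForm_vermaH (q : ℝ) (lam : ℂ) (v w : ℕ →₀ ℂ) :
    shapovalovForm q lam (vermaH lam v) w = shapovalovForm q lam v (vermaH lam w) := by
  refine bilin_adjoint_of_single (fun n m => ?_) v w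
  simp only [vermaH_single, map_smul, LinearMap.smul_apply, smul_eq_mul,
    shapovalovForm_single_single]
  split_ifs with h
  · rw [h]
  · simp

theorem shapovalov_form_general (q : ℝ) (lam : ℂ) :
    (∃! B : (ℕ →₀ ℂ) →ₗ[ℂ] (ℕ →₀ ℂ) →ₗ[ℂ] ℂ,
      (∀ v w, B v w = B w v) ∧
      B (Finsupp.single 0 1) (Finsupp.single 0 1) = 1 ∧
      (∀ v w, B (vermaE q lam v) w = B v (vermaF w)) ∧
      (∀ v w, B (vermaH lam v) w = B v (vermaH lam w))) ∧
    (∀ B : (ℕ →₀ ℂ) →ₗ[ℂ] (ℕ →₀ ℂ) →ₗ[ℂ] ℂ,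
      (∀ v w, B v w = B w v) →
      B (Finsupp.single 0 1) (Finsupp.single 0 1) = 1 →
      (∀ v w, B (vermaE q lam v) w = B v (vermaF w)) →
      (∀ v w, B (vermaH lam v) w = B v (vermaH lam w)) →
      ∀ n m : ℕ, B (Finsupp.single n 1) (Finsupp.single m 1) =
        if m = n then (-1 : ℂ) ^ n * qFacC q n * qShiftC q (-lam) n else 0) := by
  have hone : shapovalovForm q lam (Finsupp.single 0 1) (Finsupp.single 0 1) = 1 := by
    rw [shapovalovForm_single_single, if_pos rfl, shapovalovCoeff_zero]
  refine ⟨⟨shapovalovForm q lam, ⟨shapovalovForm_comm q lam, hone, shapovalovForm_vermaE q lam,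
    shapovalovForm_vermaH q lam⟩, ?_⟩, fun B _ h1 hE hH => apply_single_single h1 hE hH⟩
  rintro B ⟨-, h1, hE, hH⟩
  exact bilin_ext_single fun n m => by
    rw [apply_single_single h1 hE hH, shapovalovForm_single_single]

/-- On the Verma module `M_{q,λ}` there is a unique symmetric bilinear form with
`⟨x_λ, x_λ⟩ = 1`, `⟨e·v, w⟩ = ⟨v, f·w⟩` and `⟨h·v, w⟩ = ⟨v, h·w⟩` (the Shapovalov form),
and it satisfies `⟨f^n·x_λ, f^m·x_λ⟩ = δ_{m,n} (-1)^n [n]_q! ([-λ]_q)_n`. -/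
theorem shapovalov_form (q : ℝ) (hq0 : 0 < q) (hq1 : q < 1) (lam : ℂ) :
    (∃! B : (ℕ →₀ ℂ) →ₗ[ℂ] (ℕ →₀ ℂ) →ₗ[ℂ] ℂ,
      (∀ v w, B v w = B w v) ∧
      B (Finsupp.single 0 1) (Finsupp.single 0 1) = 1 ∧
      (∀ v w, B (vermaE q lam v) w = B v (vermaF w)) ∧
      (∀ v w, B (vermaH lam v) w = B v (vermaH lam w))) ∧
    (∀ B : (ℕ →₀ ℂ) →ₗ[ℂ] (ℕ →₀ ℂ) →ₗ[ℂ] ℂ,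
      (∀ v w, B v w = B w v) →
      B (Finsupp.single 0 1) (Finsupp.single 0 1) = 1 →
      (∀ v w, B (vermaE q lam v) w = B v (vermaF w)) →
      (∀ v w, B (vermaH lam v) w = B v (vermaH lam w)) →
      ∀ n m : ℕ, B (Finsupp.single n 1) (Finsupp.single m 1) =
        if m = n then (-1 : ℂ) ^ n * qFacC q n * qShiftC q (-lam) n else 0) :=
  shapovalov_form_general q lam
end

section
/- The formal power series A_q(x,y) = Σ_{k=0}^{∞} (1/(q;q)_k) y^k (1/(x;q)_k) in noncommuting variables x, y with xy = q² yx has two-sided inverse A_q^{-1}(x,y) = Σ_{k=0}^{∞} ((−1)^k q^{k(k−1)/2}/(q;q)_k) (1/(q^{−k−1}x;q)_k) y^k, i.e., A_q(x,y) · A_q^{-1}(x,y) = 1 = A_q^{-1}(x,y) · A_q(x,y) in the ring of formal power series in y with coefficients rational in x. -/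
open Finset

/-!
Collecting powers of `y` by means of `g(x) y = y g(q² x)`, the coefficient of `y ^ n` in
`A_q · A_q⁻¹` is `∑ j ≤ n, mulInvTerm q x n j`, and in `A_q⁻¹ · A_q` it is
`∑ j ≤ n, invMulTerm q x n j`. For `n ≥ 1` both sums telescope: their partial sums have
closed forms (Gosper's algorithm finds them) carrying a factor `1 - q ^ (n - m)`, which
vanishes for the full sum `m = n`.
-/

lemma qPoch_zero (a q : ℂ) : qPoch a q 0 = 1 := prod_range_zero _

lemma qPoch_succ (a q : ℂ) (k : ℕ) : qPoch a q (k + 1) = qPoch a q k * (1 - a * q ^ k) :=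
  prod_range_succ _ _

lemma qPoch_add (a q : ℂ) (k l : ℕ) :
    qPoch a q (k + l) = qPoch a q k * qPoch (a * q ^ k) q l := by
  simp only [qPoch, prod_range_add, pow_add, mul_assoc]

lemma qPoch_succ' (a q : ℂ) (k : ℕ) : qPoch a q (k + 1) = (1 - a) * qPoch (a * q) q k := by
  rw [add_comm, qPoch_add, pow_one]
  simp [qPoch]

lemma qPoch_self_succ (q : ℂ) (k : ℕ) :
    qPoch q q (k + 1) = qPoch q q k * (1 - q ^ (k + 1)) := by
  rw [qPoch_succ, pow_succ']

noncomputable def mulInvTerm (q x : ℂ) (n j : ℕ) : ℂ :=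
  ((-1 : ℂ) ^ j * q ^ (j * (j - 1) / 2) / qPoch q q j) / qPoch q q (n - j) /
    (qPoch (q ^ (2 * j) * x) q (n - j) * qPoch (q ^ ((j : ℤ) - 1) * x) q j)

lemma sum_range_mulInvTerm {q x : ℂ} (hq : ∀ m : ℕ, 1 - q ^ (m + 1) ≠ 0)
    (hx : ∀ m : ℕ, 1 - q ^ m * x ≠ 0) {n m : ℕ} (hn : n ≠ 0) (hm : m ≤ n) :
    ∑ j ∈ range (m + 1), mulInvTerm q x n j =
      (-1) ^ m * q ^ ((m + 1) * m / 2) * (1 - q ^ (n - m)) /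
        ((1 - q ^ n) * qPoch q q m * qPoch q q (n - m) * qPoch (q ^ m * x) q n) := by
  have hqn : 1 - q ^ n ≠ 0 := by
    obtain ⟨n, rfl⟩ := Nat.exists_eq_add_one_of_ne_zero hn; exact hq n
  induction m with
  | zero =>
    simp only [zero_add, sum_range_one, mulInvTerm, zero_mul, mul_zero, Nat.zero_div, pow_zero,
      qPoch_zero, div_one, Nat.sub_zero, mul_one, one_mul]
    field_simp
  | succ m ih =>
    obtain ⟨k, rfl⟩ := Nat.exists_eq_add_of_le hm
    rw [sum_range_succ, ih (by omega)]
    have e1 : qPoch (q ^ m * x) q (m + 1 + k) =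
        qPoch (q ^ m * x) q (m + 1 + k + 1) / (1 - q ^ (2 * m + 1 + k) * x) := by
      rw [eq_div_iff (hx _), qPoch_succ _ _ (m + 1 + k)]; ring_nf
    have e2 : qPoch (q ^ (m + 1) * x) q (m + 1 + k) =
        qPoch (q ^ m * x) q (m + 1 + k + 1) / (1 - q ^ m * x) := by
      rw [eq_div_iff (hx _), qPoch_succ']; ring_nf
    have e3 : qPoch (q ^ (2 * (m + 1)) * x) q k * qPoch (q ^ m * x) q (m + 1) =
        qPoch (q ^ m * x) q (m + 1 + k + 1) / (1 - q ^ (2 * m + 1) * x) := by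
      rw [eq_div_iff (hx _), show m + 1 + k + 1 = (m + 1) + (k + 1) by ring,
        qPoch_add _ _ (m + 1), qPoch_succ' _ q k]
      ring_nf
    have ht : q ^ ((m + 1 + 1) * (m + 1) / 2) = q ^ ((m + 1) * m / 2) * q ^ (m + 1) := by
      rw [← pow_add]; congr 1; simpa using Nat.triangle_succ (m + 1)
    simp only [mulInvTerm, show m + 1 + k - m = k + 1 by omega,
      show m + 1 + k - (m + 1) = k by omega, Nat.add_sub_cancel, Nat.cast_add, Nat.cast_one,
      add_sub_cancel_right, zpow_natCast, e1, e2, e3, qPoch_self_succ, ht]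
    have := hq m; have := hq k
    field_simp
    ring

noncomputable def invMulTerm (q x : ℂ) (n j : ℕ) : ℂ :=
  ((-1 : ℂ) ^ j * q ^ (j * (j - 1) / 2) / qPoch q q j) / qPoch q q (n - j) /
    (qPoch (q ^ (2 * (n : ℤ) - (j : ℤ) - 1) * x) q j * qPoch x q (n - j))

-- Summed from the top (`j = n - i`): from the bottom, the closed form of the partial sums
-- involves `(x;q)_(n-m-1)`, whose subtraction truncates at `m = n`.
lemma sum_range_invMulTerm_sub {q x : ℂ} (hq : ∀ m : ℕ, 1 - q ^ (m + 1) ≠ 0)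
    (hx : ∀ m : ℕ, 1 - q ^ m * x ≠ 0) {n m : ℕ} (hn : n ≠ 0) (hm : m ≤ n) :
    ∑ i ∈ range (m + 1), invMulTerm q x n (n - i) =
      (-1) ^ (n - m) * q ^ ((n - m) * (n - m - 1) / 2) * (1 - q ^ (n - m)) *
          (1 - q ^ (2 * n - 1) * x) /
        ((1 - q ^ n) * (1 - q ^ (n - 1) * x) * qPoch q q (n - m) * qPoch q q m *
          qPoch (q ^ (n + m) * x) q (n - m) * qPoch x q m) := by
  induction m with
  | zero =>
    obtain ⟨n, rfl⟩ := Nat.exists_eq_add_one_of_ne_zero hn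
    have e1 : qPoch (q ^ n * x) q (n + 1) =
        qPoch (q ^ n * x) q (n + 1 + 1) / (1 - q ^ (2 * n + 1) * x) := by
      rw [eq_div_iff (hx _), qPoch_succ _ _ (n + 1)]; ring_nf
    have e2 : qPoch (q ^ (n + 1) * x) q (n + 1) =
        qPoch (q ^ n * x) q (n + 1 + 1) / (1 - q ^ n * x) := by
      rw [eq_div_iff (hx _), qPoch_succ' _ _ (n + 1)]; ring_nf
    have hz : 2 * ((n + 1 : ℕ) : ℤ) - ((n + 1 : ℕ) : ℤ) - 1 = (n : ℤ) := by
      push_cast; ring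
    rw [zero_add, sum_range_one]
    simp only [invMulTerm, Nat.sub_zero, Nat.sub_self, hz, zpow_natCast, qPoch_zero,
      show 2 * (n + 1) - 1 = 2 * n + 1 by omega, Nat.add_sub_cancel, add_zero, e1, e2]
    have := hq n; have := hx n
    field_simp
  | succ m ih =>
    obtain ⟨k, rfl⟩ := Nat.exists_eq_add_of_le hm
    rw [sum_range_succ, ih (by omega)]
    have e1 : qPoch (q ^ (2 * m + 1 + k) * x) q k =
        qPoch (q ^ (2 * m + 1 + k) * x) q (k + 1) / (1 - q ^ (2 * m + 1 + 2 * k) * x) := by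
      rw [eq_div_iff (hx _), qPoch_succ]; ring_nf
    have e2 : qPoch (q ^ (2 * m + 2 + k) * x) q k =
        qPoch (q ^ (2 * m + 1 + k) * x) q (k + 1) / (1 - q ^ (2 * m + 1 + k) * x) := by
      rw [eq_div_iff (hx _), qPoch_succ']; ring_nf
    have hz :
        2 * ((m + 1 + k : ℕ) : ℤ) - ((k : ℕ) : ℤ) - 1 = ((2 * m + 1 + k : ℕ) : ℤ) := by
      push_cast; ring
    have ht : q ^ ((k + 1) * k / 2) = q ^ (k * (k - 1) / 2) * q ^ k := by
      rw [← pow_add]; congr 1; simpa using Nat.triangle_succ k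
    simp only [invMulTerm, show m + 1 + k - (m + 1) = k by omega,
      show m + 1 + k - m = k + 1 by omega, show m + 1 + k - k = m + 1 by omega,
      show m + 1 + k + m = 2 * m + 1 + k by omega,
      show m + 1 + k + (m + 1) = 2 * m + 2 + k by omega,
      show 2 * (m + 1 + k) - 1 = 2 * m + 1 + 2 * k by omega, show m + 1 + k - 1 = m + k by omega,
      Nat.add_sub_cancel, hz, zpow_natCast, e1, e2, qPoch_self_succ, qPoch_succ x, ht,
      pow_succ (-1 : ℂ)]
    have := hq m; have := hq k
    have : 1 - q ^ (m + 1 + k) ≠ 0 := by rw [add_right_comm]; exact hq (m + k)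
    have : 1 - x * q ^ m ≠ 0 := by rw [mul_comm]; exact hx m
    have : 1 - x * q ^ (m + k) ≠ 0 := by rw [mul_comm]; exact hx (m + k)
    field_simp
    ring

lemma sum_range_mulInvTerm_eq_zero {q x : ℂ} (hq : ∀ m : ℕ, 1 - q ^ (m + 1) ≠ 0)
    (hx : ∀ m : ℕ, 1 - q ^ m * x ≠ 0) {n : ℕ} (hn : n ≠ 0) :
    ∑ j ∈ range (n + 1), mulInvTerm q x n j = 0 := by
  simp [sum_range_mulInvTerm hq hx hn le_rfl]

lemma sum_range_invMulTerm_eq_zero {q x : ℂ} (hq : ∀ m : ℕ, 1 - q ^ (m + 1) ≠ 0)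
    (hx : ∀ m : ℕ, 1 - q ^ m * x ≠ 0) {n : ℕ} (hn : n ≠ 0) :
    ∑ j ∈ range (n + 1), invMulTerm q x n j = 0 := by
  rw [← sum_range_reflect]
  simp [sum_range_invMulTerm_sub hq hx hn le_rfl]

/-- The formal power series `A_q(x,y) = Σ_k (1/(q;q)_k) y^k (1/(x;q)_k)` in noncommuting
variables with `xy = q² yx` is invertible with inverse
`A_q^{-1}(x,y) = Σ_k ((-1)^k q^{k(k-1)/2}/(q;q)_k) (1/(q^{-k-1}x;q)_k) y^k`:
using the commutation rule `g(x) y = y g(q² x)` to collect powers of `y`, the coefficient of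
`y^n` (a rational function of `x`, here evaluated at a generic point `x ∈ ℂ`) in each of the
two products `A_q(x,y)·A_q^{-1}(x,y)` and `A_q^{-1}(x,y)·A_q(x,y)` equals `δ_{n,0}`. -/
theorem Aq_inverse (q : ℝ) (hq0 : 0 < q) (hq1 : q < 1)
    (x : ℂ) (hx : ∀ m : ℤ, x ≠ (q : ℂ) ^ m) (n : ℕ) :
    (∑ j ∈ range (n + 1),
        ((-1 : ℂ) ^ j * (q : ℂ) ^ (j * (j - 1) / 2) / qPoch (q : ℂ) (q : ℂ) j) /
          qPoch (q : ℂ) (q : ℂ) (n - j) /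
          (qPoch ((q : ℂ) ^ (2 * j) * x) (q : ℂ) (n - j) *
            qPoch ((q : ℂ) ^ ((j : ℤ) - 1) * x) (q : ℂ) j)
      = if n = 0 then 1 else 0) ∧
    (∑ j ∈ range (n + 1),
        ((-1 : ℂ) ^ j * (q : ℂ) ^ (j * (j - 1) / 2) / qPoch (q : ℂ) (q : ℂ) j) /
          qPoch (q : ℂ) (q : ℂ) (n - j) /
          (qPoch ((q : ℂ) ^ (2 * (n : ℤ) - (j : ℤ) - 1) * x) (q : ℂ) j *
            qPoch x (q : ℂ) (n - j))
      = if n = 0 then 1 else 0) := by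
  have hq : ∀ m : ℕ, 1 - (q : ℂ) ^ (m + 1) ≠ 0 := fun m => by
    rw [sub_ne_zero, ne_comm, ← Complex.ofReal_pow, Ne, Complex.ofReal_eq_one]
    exact (pow_lt_one₀ hq0.le hq1 m.succ_ne_zero).ne
  have hqx : ∀ m : ℕ, 1 - (q : ℂ) ^ m * x ≠ 0 := fun m h => by
    refine hx (-m) ?_
    rw [zpow_neg, zpow_natCast]
    exact eq_inv_of_mul_eq_one_right (by linear_combination -h)
  rcases eq_or_ne n 0 with rfl | hn
  · simp [qPoch]
  · rw [if_neg hn]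
    exact ⟨sum_range_mulInvTerm_eq_zero hq hqx hn, sum_range_invMulTerm_eq_zero hq hqx hn⟩
end
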